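/- arXiv:math/0503338 — 7 statements merged into one kernel-verified Lean document; each statement's English description precedes it below -/
import Mathlib

section
/- Let k ≥ 0 be an integer, let θ, φ ∈ ℝ and t ∈ (-1,1). Then the Radon projection of the ridge polynomial U_k(θ;·) in direction φ at parameter t satisfies R_φ(U_k(θ;·); t) = (2/(k+1)) · √(1-t²) · U_k(t) · U_k(cos(φ-θ)). (Marr's formula.) -/
open MeasureTheory Real

/-- `chebU k` is the Chebyshev polynomial of the second kind of degree `k`,
evaluated as a real function. -/
noncomputable def chebU (k : ℕ) (x : ℝ) : ℝ :=
  (Polynomial.Chebyshev.U ℝ (k : ℤ)).eval x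

/-- The ridge polynomial `U_k(θ; x) = U_k(x₁ cos θ + x₂ sin θ)`. -/
noncomputable def ridge (k : ℕ) (θ : ℝ) (x : ℝ × ℝ) : ℝ :=
  chebU k (x.1 * Real.cos θ + x.2 * Real.sin θ)

/-- The Radon projection `R_θ(f; t)` of `f : ℝ² → ℝ`. -/
noncomputable def radon (f : ℝ × ℝ → ℝ) (θ t : ℝ) : ℝ :=
  ∫ s in (-Real.sqrt (1 - t ^ 2))..(Real.sqrt (1 - t ^ 2)),
    f (t * Real.cos θ - s * Real.sin θ, t * Real.sin θ + s * Real.cos θ)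

lemma chebU_cos (k : ℕ) (τ : ℝ) :
    chebU k (Real.cos τ) * Real.sin τ = Real.sin (((k : ℝ) + 1) * τ) := by
  have := Polynomial.Chebyshev.U_real_cos τ (k : ℤ)
  push_cast at this
  simpa [chebU] using this

lemma chebU_eval_one : ∀ k : ℕ, chebU k 1 = (k : ℝ) + 1
  | 0 => by simp [chebU, Polynomial.Chebyshev.U_zero]
  | 1 => by norm_num [chebU, Polynomial.Chebyshev.U_one]
  | (n + 2) => by
    have h1 := chebU_eval_one n
    have h2 := chebU_eval_one (n + 1)
    have h := Polynomial.Chebyshev.U_add_two ℝ (n : ℤ)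
    have hc : ((n : ℤ) + 2) = ((n + 2 : ℕ) : ℤ) := by push_cast; ring
    have hc1 : ((n : ℤ) + 1) = ((n + 1 : ℕ) : ℤ) := by push_cast; ring
    rw [hc, hc1] at h
    have : chebU (n + 2) 1 = 2 * 1 * chebU (n + 1) 1 - chebU n 1 := by
      simp only [chebU, h, Polynomial.eval_sub, Polynomial.eval_mul, Polynomial.eval_ofNat,
        Polynomial.eval_X]
    rw [this, h1, h2]; push_cast; ring

lemma chebU_neg : ∀ (k : ℕ) (x : ℝ), chebU k (-x) = (-1) ^ k * chebU k x
  | 0, x => by simp [chebU, Polynomial.Chebyshev.U_zero]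
  | 1, x => by simp [chebU, Polynomial.Chebyshev.U_one]
  | (n + 2), x => by
    have h1 := chebU_neg n x
    have h2 := chebU_neg (n + 1) x
    have h := Polynomial.Chebyshev.U_add_two ℝ (n : ℤ)
    have hc : ((n : ℤ) + 2) = ((n + 2 : ℕ) : ℤ) := by push_cast; ring
    have hc1 : ((n : ℤ) + 1) = ((n + 1 : ℕ) : ℤ) := by push_cast; ring
    rw [hc, hc1] at h
    have e : ∀ y : ℝ, chebU (n + 2) y = 2 * y * chebU (n + 1) y - chebU n y := by
      intro y
      simp only [chebU, h, Polynomial.eval_sub, Polynomial.eval_mul, Polynomial.eval_ofNat,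
        Polynomial.eval_X]
    rw [e, e, h1, h2]; ring

lemma marr_key (k : ℕ) (τ ψ : ℝ) (hτ : τ ∈ Set.Ioo 0 Real.pi) :
    (∫ s in (-Real.sin τ)..(Real.sin τ), chebU k (Real.cos τ * Real.cos ψ - s * Real.sin ψ)) =
      (2 / ((k : ℝ) + 1)) * Real.sin τ * chebU k (Real.cos τ) * chebU k (Real.cos ψ) := by
  have hsinτ : 0 < Real.sin τ := Real.sin_pos_of_pos_of_lt_pi hτ.1 hτ.2
  have hk1 : ((k : ℝ) + 1) ≠ 0 := by positivity
  by_cases hb : Real.sin ψ = 0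
  · have hcsq : Real.cos ψ ^ 2 = 1 := by
      have := Real.sin_sq_add_cos_sq ψ
      rw [hb] at this; nlinarith
    have hcases : Real.cos ψ = 1 ∨ Real.cos ψ = -1 :=
      mul_self_eq_one_iff.mp (by nlinarith : Real.cos ψ * Real.cos ψ = 1)
    rcases hcases with hc | hc
    · simp only [hb, hc, mul_one, mul_zero, sub_zero]
      rw [intervalIntegral.integral_const, chebU_eval_one, smul_eq_mul, div_eq_mul_inv]
      linear_combination (-2 * Real.sin τ * chebU k (Real.cos τ)) * (mul_inv_cancel₀ hk1)
    · simp only [hb, hc, mul_neg_one, mul_zero, sub_zero]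
      rw [intervalIntegral.integral_const]
      have h1 : chebU k (-Real.cos τ) = (-1) ^ k * chebU k (Real.cos τ) := chebU_neg k _
      have h2 : chebU k (-1 : ℝ) = (-1) ^ k * ((k : ℝ) + 1) := by
        rw [show (-1 : ℝ) = -(1 : ℝ) from rfl, chebU_neg, chebU_eval_one]
      rw [smul_eq_mul, h1, h2, div_eq_mul_inv]
      linear_combination (-2 * Real.sin τ * chebU k (Real.cos τ) * (-1 : ℝ) ^ k) *
        (mul_inv_cancel₀ hk1)
  · set b := Real.sin ψ with hbdef
    set c := Real.cos τ * Real.cos ψ with hc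
    have hF : ∀ s : ℝ, HasDerivAt
        (fun s => (Polynomial.Chebyshev.T ℝ ((k : ℤ) + 1)).eval (c - s * b) *
          (-1 / (((k : ℝ) + 1) * b)))
        (chebU k (c - s * b)) s := by
      intro s
      have hinner : HasDerivAt (fun s : ℝ => c - s * b) (-b) s := by
        simpa using ((hasDerivAt_id s).mul_const b).const_sub c
      have hpoly := (Polynomial.Chebyshev.T ℝ ((k : ℤ) + 1)).hasDerivAt (c - s * b)
      have hcomp := (hpoly.comp s hinner).mul_const (-1 / (((k : ℝ) + 1) * b))
      refine hcomp.congr_deriv (Eq.symm ?_)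
      rw [Polynomial.Chebyshev.T_derivative_eq_U]
      simp only [Polynomial.eval_mul, Polynomial.eval_intCast, add_sub_cancel_right, chebU]
      push_cast
      field_simp
      try ring
    have hcont : Continuous fun s : ℝ => chebU k (c - s * b) := by
      exact (Polynomial.Chebyshev.U ℝ (k : ℤ)).continuous_aeval.comp (by continuity)
    rw [intervalIntegral.integral_eq_sub_of_hasDerivAt (fun x _ => hF x)
      (hcont.intervalIntegrable _ _)]
    have h1 : c - Real.sin τ * b = Real.cos (τ + ψ) := by
      rw [Real.cos_add]; try ring
    have h2 : c - -Real.sin τ * b = Real.cos (τ - ψ) := by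
      rw [Real.cos_sub]; try ring
    rw [h1, h2]
    have hT1 : (Polynomial.Chebyshev.T ℝ ((k : ℤ) + 1)).eval (Real.cos (τ + ψ)) =
        Real.cos (((k : ℝ) + 1) * (τ + ψ)) := by
      have := Polynomial.Chebyshev.T_real_cos (τ + ψ) ((k : ℤ) + 1)
      push_cast at this; exact this
    have hT2 : (Polynomial.Chebyshev.T ℝ ((k : ℤ) + 1)).eval (Real.cos (τ - ψ)) =
        Real.cos (((k : ℝ) + 1) * (τ - ψ)) := by
      have := Polynomial.Chebyshev.T_real_cos (τ - ψ) ((k : ℤ) + 1)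
      push_cast at this; exact this
    rw [hT1, hT2]
    have hdiff : Real.cos (((k : ℝ) + 1) * (τ + ψ)) - Real.cos (((k : ℝ) + 1) * (τ - ψ)) =
        -2 * Real.sin (((k : ℝ) + 1) * τ) * Real.sin (((k : ℝ) + 1) * ψ) := by
      rw [Real.cos_sub_cos]
      ring_nf
    have hu1 := chebU_cos k τ
    have hu2 := chebU_cos k ψ
    have : Real.cos (((k : ℝ) + 1) * (τ + ψ)) * (-1 / (((k : ℝ) + 1) * b)) -
        Real.cos (((k : ℝ) + 1) * (τ - ψ)) * (-1 / (((k : ℝ) + 1) * b)) =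
        (Real.cos (((k : ℝ) + 1) * (τ + ψ)) - Real.cos (((k : ℝ) + 1) * (τ - ψ))) *
          (-1 / (((k : ℝ) + 1) * b)) := by ring
    rw [this, hdiff, ← hu1, ← hu2, ← hbdef]
    field_simp

/-- Marr's formula. -/
theorem marr_formula (k : ℕ) (θ φ t : ℝ) (ht : t ∈ Set.Ioo (-1 : ℝ) 1) :
    radon (ridge k θ) φ t =
      (2 / (k + 1)) * Real.sqrt (1 - t ^ 2) * chebU k t * chebU k (Real.cos (φ - θ)) := by
  obtain ⟨ht1, ht2⟩ := ht
  set τ := Real.arccos t with hτdef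
  have hτ : τ ∈ Set.Ioo 0 Real.pi :=
    ⟨Real.arccos_pos.mpr ht2, lt_of_le_of_ne (Real.arccos_le_pi t) (fun h => absurd (Real.arccos_eq_pi.mp h) (by linarith))⟩
  have hcos : Real.cos τ = t := Real.cos_arccos ht1.le ht2.le
  have hsin : Real.sin τ = Real.sqrt (1 - t ^ 2) := by
    rw [hτdef, Real.sin_arccos]
  have key := marr_key k τ (φ - θ) hτ
  rw [hcos, hsin] at key
  rw [radon, ← key]
  apply intervalIntegral.integral_congr
  intro s _
  simp only [ridge, chebU]
  congr 1
  rw [Real.cos_sub, Real.sin_sub]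
  ring
end

section
/- Let k ≥ 0 be an integer and θ, φ ∈ ℝ. Then (1/π) · ∫_{B²} U_k(θ;x) · U_k(φ;x) dx = U_k(cos(φ-θ))/(k+1), where the integral is over the closed unit disk B² = {(x,y) ∈ ℝ² : x² + y² ≤ 1} with respect to two-dimensional Lebesgue measure. -/
open MeasureTheory Real

/-- The closed unit disk in the plane. -/
def unitDisk : Set (ℝ × ℝ) := {x : ℝ × ℝ | x.1 ^ 2 + x.2 ^ 2 ≤ 1}

/-! ### Auxiliary lemmas -/

@[fun_prop]
lemma continuous_chebU (k : ℕ) : Continuous (chebU k) := by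
  unfold chebU; exact (Polynomial.Chebyshev.U ℝ (k : ℤ)).continuous

lemma chebU_cos_s1 (k : ℕ) (x : ℝ) : chebU k (cos x) * sin x = sin (((k : ℝ) + 1) * x) := by
  have := Polynomial.Chebyshev.U_real_cos x (k : ℤ)
  unfold chebU
  rw [this]
  norm_num

lemma chebU_neg_cos (k : ℕ) (β : ℝ) :
    chebU k (-cos β) * sin β = (-1) ^ k * sin (((k : ℝ) + 1) * β) := by
  have h1 := chebU_cos_s1 k (π - β)
  rw [Real.cos_pi_sub, Real.sin_pi_sub] at h1
  rw [h1, show ((k : ℝ) + 1) * (π - β) = (((k + 1 : ℕ) : ℤ) : ℝ) * π - (((k : ℝ) + 1) * β) by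
    push_cast; ring, Real.sin_int_mul_pi_sub, zpow_natCast, pow_succ]
  ring

lemma chebU_one (k : ℕ) : chebU k 1 = k + 1 := by
  induction k using Nat.twoStepInduction with
  | zero => simp [chebU, Polynomial.Chebyshev.U_zero]
  | one => simp [chebU, Polynomial.Chebyshev.U_one]; norm_num
  | more n ih1 ih2 =>
    unfold chebU at *
    rw [show ((n + 2 : ℕ) : ℤ) = (n : ℤ) + 2 by push_cast; ring,
      Polynomial.Chebyshev.U_add_two]
    push_cast at ih1 ih2
    simp only [Polynomial.eval_sub, Polynomial.eval_mul, Polynomial.eval_ofNat,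
      Polynomial.eval_X] at *
    rw [ih1, ih2]; push_cast; ring

lemma chebU_neg_one (k : ℕ) : chebU k (-1) = (-1) ^ k * (k + 1) := by
  induction k using Nat.twoStepInduction with
  | zero => simp [chebU, Polynomial.Chebyshev.U_zero]
  | one => simp [chebU, Polynomial.Chebyshev.U_one]; norm_num
  | more n ih1 ih2 =>
    unfold chebU at *
    rw [show ((n + 2 : ℕ) : ℤ) = (n : ℤ) + 2 by push_cast; ring,
      Polynomial.Chebyshev.U_add_two]
    push_cast at ih1 ih2
    simp only [Polynomial.eval_sub, Polynomial.eval_mul, Polynomial.eval_ofNat,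
      Polynomial.eval_X] at *
    rw [ih1, ih2]; push_cast; ring

lemma cheb_ftc (k : ℕ) {q : ℝ} (hq : q ≠ 0) (p c : ℝ) :
    ∫ b in (-c)..c, chebU k (p + b * q) =
      ((Polynomial.Chebyshev.T ℝ ((k : ℤ) + 1)).eval (p + c * q)
        - (Polynomial.Chebyshev.T ℝ ((k : ℤ) + 1)).eval (p - c * q)) / (((k : ℝ) + 1) * q) := by
  have hk : ((k : ℝ) + 1) ≠ 0 := by positivity
  have hD : ∀ b ∈ Set.uIcc (-c) c,
      HasDerivAt (fun b => (Polynomial.Chebyshev.T ℝ ((k : ℤ) + 1)).eval (p + b * q)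
        / (((k : ℝ) + 1) * q)) (chebU k (p + b * q)) b := by
    intro b _
    have h1 : HasDerivAt (fun b : ℝ => p + b * q) q b := by
      simpa using ((hasDerivAt_id b).mul_const q).const_add p
    have h2 := (Polynomial.hasDerivAt (Polynomial.Chebyshev.T ℝ ((k : ℤ) + 1)) (p + b * q)).comp b h1
    have h3 := h2.div_const (((k : ℝ) + 1) * q)
    convert h3 using 1
    iterate 3 rfl
    rw [Polynomial.Chebyshev.T_derivative_eq_U]
    rw [show ((k : ℤ) + 1 - 1) = (k : ℤ) by ring]
    simp only [Polynomial.eval_mul, Polynomial.eval_intCast]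
    unfold chebU
    push_cast
    field_simp
  rw [intervalIntegral.integral_eq_sub_of_hasDerivAt hD
    (((continuous_chebU k).comp (by continuity)).intervalIntegrable _ _)]
  rw [show p + (-c) * q = p - c * q by ring]
  ring

lemma subst_cos {g : ℝ → ℝ} (hg : Continuous g) :
    ∫ a in (-1 : ℝ)..1, g a = ∫ β in (0 : ℝ)..π, sin β * g (cos β) := by
  have h := intervalIntegral.integral_comp_smul_deriv (a := 0) (b := π)
    (f := fun β => Real.cos β) (f' := fun β => -Real.sin β) (g := g)
    (fun x _ => Real.hasDerivAt_cos x) (Continuous.continuousOn (by continuity)) hg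
  simp only [smul_eq_mul, neg_mul, Function.comp] at h
  rw [intervalIntegral.integral_neg, Real.cos_zero, Real.cos_pi,
    show (∫ x in (1:ℝ)..(-1:ℝ), g x) = -∫ x in (-1:ℝ)..1, g x from
      intervalIntegral.integral_symm _ _] at h
  linarith [h]

lemma int_sin_sq (m : ℕ) : ∫ β in (0 : ℝ)..π, sin (((m : ℝ) + 1) * β) ^ 2 = π / 2 := by
  have hm : ((m : ℝ) + 1) ≠ 0 := by positivity
  have h := intervalIntegral.integral_comp_mul_left (a := (0:ℝ)) (b := π)
    (c := (m : ℝ) + 1) (f := fun x => Real.sin x ^ 2) hm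
  rw [h]
  rw [integral_sin_sq]
  have h2 : Real.sin (((m : ℝ) + 1) * π) = 0 := by
    have := Real.sin_nat_mul_pi (m + 1)
    push_cast at this ⊢
    linarith [this]
  rw [h2]
  simp only [Real.sin_zero, Real.cos_zero, zero_mul, mul_zero, smul_eq_mul]
  field_simp
  ring

noncomputable def rotEquiv (θ : ℝ) : (ℝ × ℝ) ≃ᵐ (ℝ × ℝ) :=
  (Complex.measurableEquivRealProd.symm.trans
    ((rotation (Circle.exp θ)).toHomeomorph.toMeasurableEquiv)).trans
    Complex.measurableEquivRealProd

lemma rotEquiv_apply (θ : ℝ) (p : ℝ × ℝ) :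
    rotEquiv θ p = (p.1 * cos θ - p.2 * sin θ, p.1 * sin θ + p.2 * cos θ) := by
  simp only [rotEquiv, MeasurableEquiv.trans_apply, Homeomorph.toMeasurableEquiv_coe,
    LinearIsometryEquiv.coe_toHomeomorph, Complex.measurableEquivRealProd_symm_apply,
    rotation_apply, Complex.measurableEquivRealProd_apply, Circle.coe_exp]
  rw [Prod.ext_iff]
  simp [Complex.mul_re, Complex.mul_im, Complex.exp_ofReal_mul_I_re, Complex.exp_ofReal_mul_I_im]
  constructor <;> ring

lemma rot_mp (θ : ℝ) : MeasurePreserving (rotEquiv θ) volume volume := by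
  unfold rotEquiv
  exact Complex.volume_preserving_equiv_real_prod.comp
    ((((rotation (Circle.exp θ)).measurePreserving)).comp
      Complex.volume_preserving_equiv_real_prod.symm)

lemma isClosed_unitDisk : IsClosed unitDisk :=
  isClosed_le (by fun_prop) continuous_const

lemma measurableSet_unitDisk : MeasurableSet unitDisk :=
  isClosed_unitDisk.measurableSet

lemma isCompact_unitDisk : IsCompact unitDisk := by
  rw [Metric.isCompact_iff_isClosed_bounded]
  refine ⟨isClosed_unitDisk, (Metric.isBounded_closedBall (x := (0:ℝ×ℝ)) (r := 1)).subset ?_⟩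
  intro p hp
  have h1 : p.1 ^ 2 + p.2 ^ 2 ≤ 1 := hp
  rw [Metric.mem_closedBall, dist_zero_right, Prod.norm_def]
  apply max_le <;> rw [Real.norm_eq_abs] <;>
    nlinarith [sq_abs p.1, sq_abs p.2, abs_nonneg p.1, abs_nonneg p.2, sq_nonneg p.1, sq_nonneg p.2]

lemma inner_eq (k : ℕ) (α a : ℝ) :
    (∫ b, Set.indicator unitDisk
        (fun p => chebU k p.1 * chebU k (p.1 * Real.cos α + p.2 * Real.sin α)) (a, b))
      = chebU k a * ∫ b in (-(Real.sqrt (1 - a ^ 2)))..(Real.sqrt (1 - a ^ 2)),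
          chebU k (a * Real.cos α + b * Real.sin α) := by
  set c := Real.sqrt (1 - a ^ 2) with hc
  by_cases h1 : a ^ 2 ≤ 1
  · have hc0 : 0 ≤ c := Real.sqrt_nonneg _
    have hc2 : c ^ 2 = 1 - a ^ 2 := Real.sq_sqrt (by linarith)
    have hset : ∀ b : ℝ, ((a, b) ∈ unitDisk) ↔ b ∈ Set.Icc (-c) c := by
      intro b
      simp only [unitDisk, Set.mem_setOf_eq, Set.mem_Icc]
      constructor
      · intro h; constructor <;> nlinarith
      · intro ⟨h2, h3⟩; nlinarith
    have heq : ∀ b : ℝ, Set.indicator unitDisk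
        (fun p => chebU k p.1 * chebU k (p.1 * Real.cos α + p.2 * Real.sin α)) (a, b)
        = Set.indicator (Set.Icc (-c) c)
            (fun b => chebU k a * chebU k (a * Real.cos α + b * Real.sin α)) b := by
      intro b
      by_cases hb : (a, b) ∈ unitDisk
      · rw [Set.indicator_of_mem hb, Set.indicator_of_mem ((hset b).mp hb)]
      · rw [Set.indicator_of_notMem hb,
          Set.indicator_of_notMem (fun h => hb ((hset b).mpr h))]
    rw [integral_congr_ae (Filter.Eventually.of_forall heq), integral_indicator measurableSet_Icc,
      integral_Icc_eq_integral_Ioc, ← intervalIntegral.integral_of_le (neg_le_self hc0),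
      intervalIntegral.integral_const_mul]
  · have hc0 : c = 0 := by
      rw [hc, Real.sqrt_eq_zero']; linarith
    have heq : ∀ b : ℝ, Set.indicator unitDisk
        (fun p => chebU k p.1 * chebU k (p.1 * Real.cos α + p.2 * Real.sin α)) (a, b) = 0 := by
      intro b
      apply Set.indicator_of_notMem
      simp only [unitDisk, Set.mem_setOf_eq, not_le]
      nlinarith [sq_nonneg b]
    rw [integral_congr_ae (Filter.Eventually.of_forall heq), integral_zero, hc0, neg_zero,
      intervalIntegral.integral_same, mul_zero]

lemma integral_restrict_pm_one {h : ℝ → ℝ} (h0 : ∀ a, a ∉ Set.Icc (-1:ℝ) 1 → h a = 0) :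
    ∫ a, h a = ∫ a in (-1:ℝ)..1, h a := by
  have he : h = Set.indicator (Set.Icc (-1:ℝ) 1) h := by
    funext a
    by_cases ha : a ∈ Set.Icc (-1:ℝ) 1
    · rw [Set.indicator_of_mem ha]
    · rw [Set.indicator_of_notMem ha, h0 a ha]
  conv_lhs => rw [he]
  rw [integral_indicator measurableSet_Icc, integral_Icc_eq_integral_Ioc,
    ← intervalIntegral.integral_of_le (by norm_num : (-1:ℝ) ≤ 1)]

theorem ridge_integral (k : ℕ) (θ φ : ℝ) :
    (1 / π) * ∫ x in unitDisk, ridge k θ x * ridge k φ x =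
      chebU k (Real.cos (φ - θ)) / (k + 1) := by
  set α := φ - θ with hαdef
  set F : ℝ × ℝ → ℝ :=
    fun p => chebU k p.1 * chebU k (p.1 * Real.cos α + p.2 * Real.sin α) with hF
  have hFc : Continuous F := by
    apply Continuous.mul
    · exact (continuous_chebU k).comp continuous_fst
    · exact (continuous_chebU k).comp (by fun_prop)
  -- Step A : rotate
  have hpre : rotEquiv θ ⁻¹' unitDisk = unitDisk := by
    ext p
    simp only [Set.mem_preimage, rotEquiv_apply, unitDisk, Set.mem_setOf_eq]
    have hkey : (p.1 * cos θ - p.2 * sin θ) ^ 2 + (p.1 * sin θ + p.2 * cos θ) ^ 2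
        = p.1 ^ 2 + p.2 ^ 2 := by
      have h1 := sin_sq_add_cos_sq θ
      linear_combination (p.1 ^ 2 + p.2 ^ 2) * h1
    rw [hkey]
  have hA : (∫ x in unitDisk, ridge k θ x * ridge k φ x) = ∫ x in unitDisk, F x := by
    have hrot := (rot_mp θ).setIntegral_preimage_emb (rotEquiv θ).measurableEmbedding
      (fun x => ridge k θ x * ridge k φ x) unitDisk
    rw [hpre] at hrot
    rw [← hrot]
    refine setIntegral_congr_fun measurableSet_unitDisk fun x _ => ?_
    simp only [rotEquiv_apply, ridge, hF]
    congr 2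
    · linear_combination x.1 * (sin_sq_add_cos_sq θ)
    · rw [hαdef, Real.cos_sub, Real.sin_sub]; ring
  -- Step B : Fubini
  have hB : (∫ x in unitDisk, F x)
      = ∫ a : ℝ, ∫ b : ℝ, Set.indicator unitDisk F (a, b) := by
    rw [← integral_indicator measurableSet_unitDisk]
    have hInt : Integrable (Set.indicator unitDisk F) ((volume : Measure ℝ).prod volume) := by
      rw [← Measure.volume_eq_prod]
      exact (integrable_indicator_iff measurableSet_unitDisk).2
        (hFc.continuousOn.integrableOn_compact isCompact_unitDisk)
    rw [show (volume : Measure (ℝ × ℝ)) = (volume : Measure ℝ).prod volume from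
      Measure.volume_eq_prod ℝ ℝ]
    exact integral_prod _ hInt
  -- Step C : inner integral
  have hC : (∫ x in unitDisk, F x)
      = ∫ a : ℝ, chebU k a * ∫ b in (-(Real.sqrt (1 - a ^ 2)))..(Real.sqrt (1 - a ^ 2)),
          chebU k (a * Real.cos α + b * Real.sin α) := by
    rw [hB]
    exact integral_congr_ae (Filter.Eventually.of_forall fun a => inner_eq k α a)
  rw [hA, hC]
  have hk1 : ((k : ℝ) + 1) ≠ 0 := by positivity
  have hsqc : Continuous fun a : ℝ => Real.sqrt (1 - a ^ 2) :=
    Real.continuous_sqrt.comp (by fun_prop)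
  have hT : Continuous fun x : ℝ => (Polynomial.Chebyshev.T ℝ ((k : ℤ) + 1)).eval x :=
    (Polynomial.Chebyshev.T ℝ ((k : ℤ) + 1)).continuous
  by_cases hs : Real.sin α = 0
  · -- degenerate case
    obtain ⟨m, hm⟩ := Real.sin_eq_zero_iff.mp hs
    have hcos : Real.cos α = (-1) ^ m := by
      rw [← hm]
      simpa using Real.cos_int_mul_pi_sub 0 m
    have hconst : ∀ a : ℝ,
        (∫ b in (-(Real.sqrt (1 - a ^ 2)))..(Real.sqrt (1 - a ^ 2)),
          chebU k (a * Real.cos α + b * Real.sin α))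
        = 2 * Real.sqrt (1 - a ^ 2) * chebU k (a * Real.cos α) := by
      intro a
      rw [hs]
      simp only [mul_zero, add_zero]
      rw [intervalIntegral.integral_const, smul_eq_mul]
      ring
    have h1 : (∫ a : ℝ, chebU k a *
          ∫ b in (-(Real.sqrt (1 - a ^ 2)))..(Real.sqrt (1 - a ^ 2)),
            chebU k (a * Real.cos α + b * Real.sin α))
        = ∫ a : ℝ, chebU k a * (2 * Real.sqrt (1 - a ^ 2) * chebU k (a * Real.cos α)) :=
      integral_congr_ae (Filter.Eventually.of_forall fun a => by simp only [hconst a])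
    have hvan : ∀ a : ℝ, a ∉ Set.Icc (-1:ℝ) 1 →
        chebU k a * (2 * Real.sqrt (1 - a ^ 2) * chebU k (a * Real.cos α)) = 0 := by
      intro a ha
      have h2 : Real.sqrt (1 - a ^ 2) = 0 := by
        rw [Real.sqrt_eq_zero']
        simp only [Set.mem_Icc, not_and_or, not_le] at ha
        rcases ha with ha | ha <;> nlinarith
      rw [h2]
      ring
    have hcont : Continuous fun a : ℝ =>
        chebU k a * (2 * Real.sqrt (1 - a ^ 2) * chebU k (a * Real.cos α)) := by
      fun_prop
    rw [h1, integral_restrict_pm_one hvan, subst_cos hcont]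
    rcases Int.even_or_odd m with he | ho
    · have hcos2 : Real.cos α = 1 := by rw [hcos, he.neg_one_zpow]
      have h3 : (∫ β in (0:ℝ)..π, sin β * (chebU k (cos β) *
            (2 * Real.sqrt (1 - cos β ^ 2) * chebU k (cos β * Real.cos α))))
          = ∫ β in (0:ℝ)..π, 2 * sin (((k : ℝ) + 1) * β) ^ 2 := by
        refine intervalIntegral.integral_congr fun β hβ => ?_
        rw [Set.uIcc_of_le Real.pi_nonneg] at hβ
        have hsin : 0 ≤ sin β := Real.sin_nonneg_of_nonneg_of_le_pi hβ.1 hβ.2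
        have hsq : Real.sqrt (1 - cos β ^ 2) = sin β := by
          rw [show (1:ℝ) - cos β ^ 2 = sin β ^ 2 by
            linear_combination - (sin_sq_add_cos_sq β)]
          exact Real.sqrt_sq hsin
        rw [hsq, hcos2, mul_one]
        linear_combination (2 * (chebU k (Real.cos β) * Real.sin β
          + Real.sin (((k:ℝ)+1) * β))) * chebU_cos_s1 k β
      rw [h3, show (fun β => 2 * sin (((k : ℝ) + 1) * β) ^ 2)
          = fun β => 2 * (fun β => sin (((k : ℝ) + 1) * β) ^ 2) β from rfl]
      rw [intervalIntegral.integral_const_mul, int_sin_sq k, hcos2, chebU_one]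
      field_simp [Real.pi_ne_zero]
    · have hcos2 : Real.cos α = -1 := by rw [hcos, ho.neg_one_zpow]
      have h3 : (∫ β in (0:ℝ)..π, sin β * (chebU k (cos β) *
            (2 * Real.sqrt (1 - cos β ^ 2) * chebU k (cos β * Real.cos α))))
          = ∫ β in (0:ℝ)..π, ((-1:ℝ)^k * 2) * sin (((k : ℝ) + 1) * β) ^ 2 := by
        refine intervalIntegral.integral_congr fun β hβ => ?_
        rw [Set.uIcc_of_le Real.pi_nonneg] at hβ
        have hsin : 0 ≤ sin β := Real.sin_nonneg_of_nonneg_of_le_pi hβ.1 hβ.2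
        have hsq : Real.sqrt (1 - cos β ^ 2) = sin β := by
          rw [show (1:ℝ) - cos β ^ 2 = sin β ^ 2 by
            linear_combination - (sin_sq_add_cos_sq β)]
          exact Real.sqrt_sq hsin
        rw [hsq, hcos2, mul_neg_one]
        linear_combination (2 * chebU k (Real.cos β) * Real.sin β) * chebU_neg_cos k β
          + (2 * (-1:ℝ)^k * Real.sin (((k:ℝ)+1) * β)) * chebU_cos_s1 k β
      rw [h3, show (fun β => ((-1:ℝ)^k * 2) * sin (((k : ℝ) + 1) * β) ^ 2)
          = fun β => ((-1:ℝ)^k * 2) * (fun β => sin (((k : ℝ) + 1) * β) ^ 2) β from rfl]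
      rw [intervalIntegral.integral_const_mul, int_sin_sq k, hcos2, chebU_neg_one]
      field_simp [Real.pi_ne_zero]
  · -- main case : sin α ≠ 0
    have hftc : ∀ a : ℝ,
        (∫ b in (-(Real.sqrt (1 - a ^ 2)))..(Real.sqrt (1 - a ^ 2)),
          chebU k (a * Real.cos α + b * Real.sin α))
        = ((Polynomial.Chebyshev.T ℝ ((k : ℤ) + 1)).eval
              (a * Real.cos α + Real.sqrt (1 - a ^ 2) * Real.sin α)
            - (Polynomial.Chebyshev.T ℝ ((k : ℤ) + 1)).eval
              (a * Real.cos α - Real.sqrt (1 - a ^ 2) * Real.sin α))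
          / (((k : ℝ) + 1) * Real.sin α) :=
      fun a => cheb_ftc k hs (a * Real.cos α) (Real.sqrt (1 - a ^ 2))
    have h1 : (∫ a : ℝ, chebU k a *
          ∫ b in (-(Real.sqrt (1 - a ^ 2)))..(Real.sqrt (1 - a ^ 2)),
            chebU k (a * Real.cos α + b * Real.sin α))
        = ∫ a : ℝ, chebU k a *
            (((Polynomial.Chebyshev.T ℝ ((k : ℤ) + 1)).eval
                (a * Real.cos α + Real.sqrt (1 - a ^ 2) * Real.sin α)
              - (Polynomial.Chebyshev.T ℝ ((k : ℤ) + 1)).eval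
                (a * Real.cos α - Real.sqrt (1 - a ^ 2) * Real.sin α))
            / (((k : ℝ) + 1) * Real.sin α)) :=
      integral_congr_ae (Filter.Eventually.of_forall fun a => by simp only [hftc a])
    have hvan : ∀ a : ℝ, a ∉ Set.Icc (-1:ℝ) 1 →
        chebU k a * (((Polynomial.Chebyshev.T ℝ ((k : ℤ) + 1)).eval
            (a * Real.cos α + Real.sqrt (1 - a ^ 2) * Real.sin α)
          - (Polynomial.Chebyshev.T ℝ ((k : ℤ) + 1)).eval
            (a * Real.cos α - Real.sqrt (1 - a ^ 2) * Real.sin α))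
        / (((k : ℝ) + 1) * Real.sin α)) = 0 := by
      intro a ha
      have h2 : Real.sqrt (1 - a ^ 2) = 0 := by
        rw [Real.sqrt_eq_zero']
        simp only [Set.mem_Icc, not_and_or, not_le] at ha
        rcases ha with ha | ha <;> nlinarith
      rw [h2]
      simp
    have hcont : Continuous fun a : ℝ =>
        chebU k a * (((Polynomial.Chebyshev.T ℝ ((k : ℤ) + 1)).eval
            (a * Real.cos α + Real.sqrt (1 - a ^ 2) * Real.sin α)
          - (Polynomial.Chebyshev.T ℝ ((k : ℤ) + 1)).eval
            (a * Real.cos α - Real.sqrt (1 - a ^ 2) * Real.sin α))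
        / (((k : ℝ) + 1) * Real.sin α)) := by
      apply Continuous.mul (continuous_chebU k)
      apply Continuous.div_const
      exact (hT.comp (by fun_prop)).sub (hT.comp (by fun_prop))
    rw [h1, integral_restrict_pm_one hvan, subst_cos hcont]
    have h3 : (∫ β in (0:ℝ)..π, sin β * (chebU k (cos β) *
          (((Polynomial.Chebyshev.T ℝ ((k : ℤ) + 1)).eval
              (cos β * Real.cos α + Real.sqrt (1 - cos β ^ 2) * Real.sin α)
            - (Polynomial.Chebyshev.T ℝ ((k : ℤ) + 1)).eval
              (cos β * Real.cos α - Real.sqrt (1 - cos β ^ 2) * Real.sin α))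
          / (((k : ℝ) + 1) * Real.sin α))))
        = ∫ β in (0:ℝ)..π,
            (2 * sin (((k:ℝ)+1) * α) / (((k : ℝ) + 1) * Real.sin α))
              * sin (((k : ℝ) + 1) * β) ^ 2 := by
      refine intervalIntegral.integral_congr fun β hβ => ?_
      rw [Set.uIcc_of_le Real.pi_nonneg] at hβ
      have hsin : 0 ≤ sin β := Real.sin_nonneg_of_nonneg_of_le_pi hβ.1 hβ.2
      have hsq : Real.sqrt (1 - cos β ^ 2) = sin β := by
        rw [show (1:ℝ) - cos β ^ 2 = sin β ^ 2 by
          linear_combination - (sin_sq_add_cos_sq β)]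
        exact Real.sqrt_sq hsin
      rw [hsq, show cos β * Real.cos α + sin β * Real.sin α = cos (β - α) from
          (Real.cos_sub β α).symm,
        show cos β * Real.cos α - sin β * Real.sin α = cos (β + α) from
          (Real.cos_add β α).symm,
        Polynomial.Chebyshev.T_real_cos, Polynomial.Chebyshev.T_real_cos]
      push_cast
      have hcc : cos (((k:ℝ) + 1) * (β - α)) - cos (((k:ℝ) + 1) * (β + α))
          = 2 * sin (((k:ℝ)+1) * β) * sin (((k:ℝ)+1) * α) := by
        rw [Real.cos_sub_cos,
          show ((((k:ℝ)+1) * (β - α) + ((k:ℝ)+1) * (β + α)) / 2) = ((k:ℝ)+1) * β by ring,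
          show ((((k:ℝ)+1) * (β - α) - ((k:ℝ)+1) * (β + α)) / 2) = -(((k:ℝ)+1) * α) by ring,
          Real.sin_neg]
        ring
      rw [hcc]
      linear_combination ((2 * Real.sin (((k:ℝ)+1) * α) / (((k:ℝ)+1) * Real.sin α))
        * Real.sin (((k:ℝ)+1) * β)) * chebU_cos_s1 k β
    rw [h3, show (fun β => (2 * sin (((k:ℝ)+1) * α) / (((k : ℝ) + 1) * Real.sin α))
          * sin (((k : ℝ) + 1) * β) ^ 2)
        = fun β => (2 * sin (((k:ℝ)+1) * α) / (((k : ℝ) + 1) * Real.sin α))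
            * (fun β => sin (((k : ℝ) + 1) * β) ^ 2) β from rfl]
    rw [intervalIntegral.integral_const_mul, int_sin_sq k]
    have hU := chebU_cos_s1 k α
    rw [← hU]
    field_simp [Real.pi_ne_zero]
end

section
/- Let n ≥ 0 be an integer. The family of ridge polynomials {U_k(θ_{j,k}; ·) : 0 ≤ k ≤ n, 0 ≤ j ≤ k} is a basis of Π_n²: every polynomial P ∈ Π_n² can be written uniquely as P(x) = ∑_{k=0}^n ∑_{j=0}^k c_{j,k} · U_k(θ_{j,k}; x) with real coefficients c_{j,k}. -/
open MeasureTheory Real Finset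

/-- The ridge polynomial `U_k(θ; x) = U_k(x₁ cos θ + x₂ sin θ)` as a bivariate
polynomial, where `U_k` is the Chebyshev polynomial of the second kind. -/
noncomputable def ridgePoly (k : ℕ) (θ : ℝ) : MvPolynomial (Fin 2) ℝ :=
  Polynomial.aeval
    (MvPolynomial.C (Real.cos θ) * MvPolynomial.X 0 +
      MvPolynomial.C (Real.sin θ) * MvPolynomial.X 1)
    (Polynomial.Chebyshev.U ℝ (k : ℤ))

noncomputable def L (θ : ℝ) : MvPolynomial (Fin 2) ℝ :=
  MvPolynomial.C (Real.cos θ) * MvPolynomial.X 0 + MvPolynomial.C (Real.sin θ) * MvPolynomial.X 1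

lemma ridgePoly_eq (k : ℕ) (θ : ℝ) :
    ridgePoly k θ = Polynomial.aeval (L θ) (Polynomial.Chebyshev.U ℝ (k : ℤ)) := rfl

lemma ridge_rec (k : ℕ) (θ : ℝ) :
    ridgePoly (k+2) θ = 2 * L θ * ridgePoly (k+1) θ - ridgePoly k θ := by
  rw [ridgePoly_eq, ridgePoly_eq, ridgePoly_eq]
  have h : ((k+2 : ℕ) : ℤ) = ((k:ℤ)) + 2 := by push_cast; ring
  rw [h, Polynomial.Chebyshev.U_add_two]
  have h1 : ((k+1 : ℕ) : ℤ) = ((k:ℤ)) + 1 := by push_cast; ring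
  rw [h1]
  simp only [map_sub, map_mul, Polynomial.aeval_X, map_ofNat]

lemma degree_eq (d : Fin 2 →₀ ℕ) : d.degree = d 0 + d 1 := by
  rw [Finsupp.degree_apply]
  rw [Finset.sum_subset (Finset.subset_univ d.support)]
  · simp [Fin.sum_univ_two]
  · intro x _ hx
    simpa using (Finsupp.notMem_support_iff.mp hx)

lemma sum_eq_deg (d : Fin 2 →₀ ℕ) : (d.sum fun _ e => e) = d 0 + d 1 := by
  rw [Finsupp.sum, ← Finsupp.degree_apply, degree_eq]

lemma vanish_of_totalDegree_lt {p : MvPolynomial (Fin 2) ℝ} {k : ℕ}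
    (h : p.totalDegree < k) {d : Fin 2 →₀ ℕ} (hd : k ≤ d 0 + d 1) :
    MvPolynomial.coeff d p = 0 := by
  by_contra hc
  have hmem : d ∈ p.support := MvPolynomial.mem_support_iff.mpr hc
  have := MvPolynomial.le_totalDegree hmem
  rw [sum_eq_deg] at this
  omega

lemma totalDegree_le_of_vanish {p : MvPolynomial (Fin 2) ℝ} {k : ℕ}
    (h : ∀ d : Fin 2 →₀ ℕ, k + 1 ≤ d 0 + d 1 → MvPolynomial.coeff d p = 0) :
    p.totalDegree ≤ k := by
  apply Finset.sup_le
  intro d hd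
  rw [sum_eq_deg]
  by_contra hc
  exact (MvPolynomial.mem_support_iff.mp hd) (h d (by omega))

lemma totalDegree_L_le (θ : ℝ) : (L θ).totalDegree ≤ 1 := by
  apply le_trans (MvPolynomial.totalDegree_add _ _)
  simp only [max_le_iff]
  constructor <;>
  · apply le_trans (MvPolynomial.totalDegree_mul _ _)
    simp [MvPolynomial.totalDegree_X, MvPolynomial.totalDegree_C]

lemma L_pow_homog (θ : ℝ) (k : ℕ) : ((L θ)^k).IsHomogeneous k := by
  have h : (L θ).IsHomogeneous 1 := by
    apply MvPolynomial.IsHomogeneous.add <;>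
      simpa using (MvPolynomial.isHomogeneous_C_mul_X _ _)
  simpa using h.pow k

lemma L_pow_coeff_zero {θ : ℝ} {k : ℕ} {d : Fin 2 →₀ ℕ} (h : d 0 + d 1 ≠ k) :
    MvPolynomial.coeff d ((L θ)^k) = 0 :=
  (L_pow_homog θ k).coeff_eq_zero (by rwa [degree_eq])

lemma L_ne_zero (θ : ℝ) : L θ ≠ 0 := by
  intro h
  have h0 : MvPolynomial.coeff (Finsupp.single 0 1) (L θ) = Real.cos θ := by
    simp [L, MvPolynomial.coeff_X', Finsupp.single_eq_single_iff]
  have h1 : MvPolynomial.coeff (Finsupp.single 1 1) (L θ) = Real.sin θ := by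
    simp [L, MvPolynomial.coeff_X', Finsupp.single_eq_single_iff]
  rw [h] at h0 h1
  simp at h0 h1
  have := Real.sin_sq_add_cos_sq θ
  rw [← h0, ← h1] at this
  norm_num at this

noncomputable def Dop (φ : ℝ) :
    Derivation ℝ (MvPolynomial (Fin 2) ℝ) (MvPolynomial (Fin 2) ℝ) :=
  Real.sin φ • MvPolynomial.pderiv 0 - Real.cos φ • MvPolynomial.pderiv 1

lemma Dop_L (φ θ : ℝ) : Dop φ (L θ) = MvPolynomial.C (Real.sin (φ - θ)) := by
  simp [Dop, L, Real.sin_sub, MvPolynomial.pderiv_X, Pi.single_apply,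
    MvPolynomial.smul_eq_C_mul, map_sub, mul_comm]

lemma Dop_L_pow (φ θ : ℝ) (m : ℕ) :
    Dop φ ((L θ)^m) = (m : ℕ) • (MvPolynomial.C (Real.sin (φ - θ)) * (L θ)^(m-1)) := by
  rw [Derivation.leibniz_pow, Dop_L]
  simp [smul_eq_mul, mul_comm]

lemma indep {ι : Type*} [DecidableEq ι] (θ : ι → ℝ) :
    ∀ (k : ℕ) (s : Finset ι) (c : ι → ℝ), s.card ≤ k + 1 →
    (∀ i ∈ s, ∀ j ∈ s, i ≠ j → Real.sin (θ i - θ j) ≠ 0) →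
    (∑ j ∈ s, c j • (L (θ j))^k) = 0 → ∀ i ∈ s, c i = 0 := by
  intro k
  induction k with
  | zero =>
    intro s c hcard _ hsum i hi
    have hs : s = {i} := by
      apply Finset.eq_singleton_iff_unique_mem.mpr
      refine ⟨hi, fun j hj => ?_⟩
      by_contra hne
      have : 2 ≤ s.card := Finset.one_lt_card.mpr ⟨j, hj, i, hi, hne⟩
      omega
    rw [hs, Finset.sum_singleton, pow_zero] at hsum
    have := congrArg (MvPolynomial.coeff 0) hsum
    simpa [MvPolynomial.coeff_smul] using this
  | succ k ih =>
    intro s c hcard hpair hsum i hi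
    set c' : ι → ℝ := fun j => c j * (((k:ℝ) + 1) * Real.sin (θ i - θ j)) with hc'
    have hsum' : (∑ j ∈ s, c' j • (L (θ j))^k) = 0 := by
      have h0 := congrArg (Dop (θ i)) hsum
      rw [map_sum, map_zero] at h0
      rw [← h0]
      apply Finset.sum_congr rfl
      intro j _
      rw [Derivation.map_smul, Dop_L_pow]
      simp only [Nat.add_sub_cancel]
      rw [← MvPolynomial.smul_eq_C_mul, ← Nat.cast_smul_eq_nsmul ℝ, smul_smul, smul_smul, hc']
      push_cast
      congr 1
      ring
    have herase : ∀ j ∈ s.erase i, c' j = 0 := by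
      apply ih (s.erase i) c'
      · have := Finset.card_erase_of_mem hi
        omega
      · intro a ha b hb hne
        exact hpair a (Finset.mem_of_mem_erase ha) b (Finset.mem_of_mem_erase hb) hne
      · rw [Finset.sum_erase_eq_sub hi, hsum']
        have : c' i = 0 := by simp [hc']
        simp [this]
    have hcz : ∀ j ∈ s, j ≠ i → c j = 0 := by
      intro j hj hne
      have := herase j (Finset.mem_erase.mpr ⟨hne, hj⟩)
      rw [hc'] at this
      have hsin : Real.sin (θ i - θ j) ≠ 0 := hpair i hi j hj (Ne.symm hne)
      have hk : ((k:ℝ)+1) ≠ 0 := by positivity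
      rcases mul_eq_zero.mp this with h | h
      · exact h
      · exact absurd h (mul_ne_zero hk hsin)
    have hfin : c i • (L (θ i))^(k+1) = 0 := by
      rw [← hsum]
      rw [Finset.sum_eq_single_of_mem i hi]
      intro j hj hne
      rw [hcz j hj hne, zero_smul]
    rw [MvPolynomial.smul_eq_C_mul] at hfin
    rcases mul_eq_zero.mp hfin with h | h
    · simpa using h
    · exact absurd h (pow_ne_zero _ (L_ne_zero (θ i)))

lemma ridge_decomp (k : ℕ) (θ : ℝ) :
    ∃ R : MvPolynomial (Fin 2) ℝ,
      ridgePoly k θ = MvPolynomial.C ((2:ℝ)^k) * (L θ)^k + R ∧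
      ∀ d : Fin 2 →₀ ℕ, k ≤ d 0 + d 1 → MvPolynomial.coeff d R = 0 := by
  induction k using Nat.twoStepInduction with
  | zero =>
    refine ⟨0, ?_, by simp⟩
    rw [ridgePoly_eq]
    norm_num [Polynomial.Chebyshev.U_zero]
  | one =>
    refine ⟨0, ?_, by simp⟩
    rw [ridgePoly_eq]
    rw [show ((1:ℕ):ℤ) = 1 from rfl, Polynomial.Chebyshev.U_one]
    simp only [map_mul, map_ofNat, Polynomial.aeval_X, add_zero, pow_one]
  | more k ih1 ih2 =>
    obtain ⟨R0, hR0, hv0⟩ := ih1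
    obtain ⟨R1, hR1, hv1⟩ := ih2
    refine ⟨2 * L θ * R1 - MvPolynomial.C ((2:ℝ)^k) * (L θ)^k - R0, ?_, ?_⟩
    · have h2 : (MvPolynomial.C ((2:ℝ)^(k+2)) : MvPolynomial (Fin 2) ℝ)
          = 2 * MvPolynomial.C ((2:ℝ)^(k+1)) := by
        rw [show (2:ℝ)^(k+2) = 2 * (2:ℝ)^(k+1) by ring, map_mul, map_ofNat]
      rw [ridge_rec, hR1, hR0, h2]
      ring
    · intro d hd
      have hR1deg : R1.totalDegree ≤ k := totalDegree_le_of_vanish (fun d hd => hv1 d (by omega))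
      have hprod : (2 * L θ * R1).totalDegree < k + 2 := by
        calc (2 * L θ * R1).totalDegree ≤ (2 * L θ).totalDegree + R1.totalDegree :=
              MvPolynomial.totalDegree_mul _ _
          _ ≤ 1 + k := by
              gcongr
              apply le_trans (MvPolynomial.totalDegree_mul _ _)
              rw [show (2 : MvPolynomial (Fin 2) ℝ) = MvPolynomial.C 2 from (map_ofNat _ 2).symm]
              simpa [MvPolynomial.totalDegree_C] using totalDegree_L_le θ
          _ < k + 2 := by omega
      simp only [MvPolynomial.coeff_sub]
      rw [vanish_of_totalDegree_lt hprod hd, MvPolynomial.coeff_C_mul,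
        L_pow_coeff_zero (by omega), hv0 d (by omega)]
      ring

lemma ridge_coeff_vanish (k : ℕ) (θ : ℝ) {d : Fin 2 →₀ ℕ} (h : k + 1 ≤ d 0 + d 1) :
    MvPolynomial.coeff d (ridgePoly k θ) = 0 := by
  obtain ⟨R, hR, hv⟩ := ridge_decomp k θ
  rw [hR]
  simp only [MvPolynomial.coeff_add, MvPolynomial.coeff_C_mul]
  rw [L_pow_coeff_zero (by omega), hv d (by omega)]
  ring

lemma ridge_coeff_top (k : ℕ) (θ : ℝ) {d : Fin 2 →₀ ℕ} (h : d 0 + d 1 = k) :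
    MvPolynomial.coeff d (ridgePoly k θ) = 2^k * MvPolynomial.coeff d ((L θ)^k) := by
  obtain ⟨R, hR, hv⟩ := ridge_decomp k θ
  rw [hR]
  simp only [MvPolynomial.coeff_add, MvPolynomial.coeff_C_mul]
  rw [hv d (by omega)]
  ring

noncomputable def Dmon (k m : ℕ) : Fin 2 →₀ ℕ :=
  Finsupp.single 0 (k - m) + Finsupp.single 1 m

lemma Dmon_0 (k m : ℕ) : Dmon k m 0 = k - m := by
  simp [Dmon, Finsupp.single_apply]

lemma Dmon_1 (k m : ℕ) : Dmon k m 1 = m := by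
  simp [Dmon, Finsupp.single_apply]

lemma eq_Dmon {d : Fin 2 →₀ ℕ} {k : ℕ} (h : d 0 + d 1 = k) : d = Dmon k (d 1) := by
  ext i
  fin_cases i
  · show d 0 = Dmon k (d 1) 0
    rw [Dmon_0]; omega
  · show d 1 = Dmon k (d 1) 1
    rw [Dmon_1]

lemma sin_ne (k i j : ℕ) (hi : i ≤ k) (hj : j ≤ k) (hne : i ≠ j) :
    Real.sin ((i:ℝ) * π / ((k:ℝ)+1) - (j:ℝ) * π / ((k:ℝ)+1)) ≠ 0 := by
  have hk : (0:ℝ) < (k:ℝ)+1 := by positivity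
  have hr : (0:ℝ) < π / ((k:ℝ)+1) := by positivity
  have hij : ((i:ℝ) - j) ≠ 0 := by
    intro h
    exact hne (by exact_mod_cast sub_eq_zero.mp h)
  have hx : (i:ℝ)*π/((k:ℝ)+1) - (j:ℝ)*π/((k:ℝ)+1) = ((i:ℝ)-j) * (π/((k:ℝ)+1)) := by ring
  have hik : (i:ℝ) ≤ k := by exact_mod_cast hi
  have hjk : (j:ℝ) ≤ k := by exact_mod_cast hj
  have hi0 : (0:ℝ) ≤ i := Nat.cast_nonneg i
  have hj0 : (0:ℝ) ≤ j := Nat.cast_nonneg j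
  have hπ : π / ((k:ℝ)+1) * ((k:ℝ)+1) = π := by field_simp
  have h1 : -π < ((i:ℝ)-j) * (π/((k:ℝ)+1)) := by nlinarith
  have h2 : ((i:ℝ)-j) * (π/((k:ℝ)+1)) < π := by nlinarith
  rw [hx, Ne, Real.sin_eq_zero_iff_of_lt_of_lt h1 h2]
  exact mul_ne_zero hij (ne_of_gt hr)

lemma homog_eq_zero {p : MvPolynomial (Fin 2) ℝ} {k : ℕ} (hp : p.IsHomogeneous k)
    (h : ∀ m : ℕ, m ≤ k → MvPolynomial.coeff (Dmon k m) p = 0) : p = 0 := by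
  ext d
  rw [MvPolynomial.coeff_zero]
  by_cases hd : d 0 + d 1 = k
  · rw [eq_Dmon hd]
    exact h (d 1) (by omega)
  · exact hp.coeff_eq_zero (by rwa [degree_eq])

/-- coefficient matrix of the top homogeneous parts -/
noncomputable def Mk (k : ℕ) : Matrix (Fin (k+1)) (Fin (k+1)) ℝ :=
  fun m j => MvPolynomial.coeff (Dmon k (m:ℕ)) ((L ((j:ℝ) * π / ((k:ℝ)+1)))^k)

lemma Mk_mulVec_zero {k : ℕ} {c : Fin (k+1) → ℝ} (h : (Mk k).mulVec c = 0) : c = 0 := by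
  have hq : (∑ j : Fin (k+1), c j • (L (((j:ℕ):ℝ) * π / ((k:ℝ)+1)))^k) = 0 := by
    apply homog_eq_zero (k := k)
    · apply MvPolynomial.IsHomogeneous.sum
      intro j _
      rw [MvPolynomial.smul_eq_C_mul]
      simpa using (MvPolynomial.isHomogeneous_C _ (c j)).mul (L_pow_homog _ k)
    · intro m hm
      have h0 := congrFun h ⟨m, by omega⟩
      rw [MvPolynomial.coeff_sum]
      simp only [MvPolynomial.coeff_smul, smul_eq_mul]
      rw [show (0 : Fin (k+1) → ℝ) ⟨m, by omega⟩ = 0 from rfl] at h0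
      rw [← h0, Matrix.mulVec, dotProduct]
      apply Finset.sum_congr rfl
      intro j _
      rw [Mk]
      ring
  have hall := indep (fun j : Fin (k+1) => ((j:ℕ):ℝ) * π / ((k:ℝ)+1)) k Finset.univ c
    (by simp) ?_ hq
  · funext i
    exact hall i (Finset.mem_univ i)
  · intro a _ b _ hab
    exact sin_ne k a b (by omega) (by omega) (fun hh => hab (Fin.ext hh))

lemma Mk_surj (k : ℕ) : Function.Surjective (Mk k).mulVec := by
  have h1 : Function.Injective (Mk k).mulVecLin := by
    rw [← LinearMap.ker_eq_bot, LinearMap.ker_eq_bot']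
    intro c hc
    exact Mk_mulVec_zero (by simpa [Matrix.mulVecLin_apply] using hc)
  have h2 := LinearMap.injective_iff_surjective.mp h1
  intro w
  obtain ⟨c, hc⟩ := h2 w
  exact ⟨c, by simpa [Matrix.mulVecLin_apply] using hc⟩

lemma exists_rep : ∀ (n : ℕ) (P : MvPolynomial (Fin 2) ℝ),
    (∀ d : Fin 2 →₀ ℕ, n ≤ d 0 + d 1 → MvPolynomial.coeff d P = 0) →
    ∃ c : ℕ → ℕ → ℝ,
      (∀ j k : ℕ, n ≤ k ∨ k < j → c j k = 0) ∧
      P = ∑ k ∈ Finset.range n, ∑ j ∈ Finset.range (k + 1),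
        c j k • ridgePoly k ((j:ℝ) * π / ((k:ℝ) + 1)) := by
  intro n
  induction n with
  | zero =>
    intro P hP
    refine ⟨fun _ _ => 0, fun _ _ _ => rfl, ?_⟩
    have : P = 0 := by
      ext d
      rw [MvPolynomial.coeff_zero]
      exact hP d (by omega)
    simp [this]
  | succ n ih =>
    intro P hP
    obtain ⟨c', hc'⟩ := Mk_surj n (fun m => MvPolynomial.coeff (Dmon n (m:ℕ)) P / 2^n)
    set S := ∑ j : Fin (n+1), c' j • ridgePoly n (((j:ℕ):ℝ) * π / ((n:ℝ)+1)) with hS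
    have hQ : ∀ d : Fin 2 →₀ ℕ, n ≤ d 0 + d 1 → MvPolynomial.coeff d (P - S) = 0 := by
      intro d hd
      rw [MvPolynomial.coeff_sub]
      by_cases hdn : d 0 + d 1 = n
      · have hd1 : d 1 ≤ n := by omega
        have hdd : d = Dmon n (d 1) := eq_Dmon hdn
        have hdeg : Dmon n (d 1) 0 + Dmon n (d 1) 1 = n := by
          rw [Dmon_0, Dmon_1]; omega
        have hSc : MvPolynomial.coeff d S = MvPolynomial.coeff d P := by
          rw [hdd, hS, MvPolynomial.coeff_sum]
          have hstep : ∀ j : Fin (n+1),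
              MvPolynomial.coeff (Dmon n (d 1))
                (c' j • ridgePoly n (((j:ℕ):ℝ) * π / ((n:ℝ)+1)))
              = 2^n * (Mk n ⟨d 1, by omega⟩ j * c' j) := by
            intro j
            rw [MvPolynomial.coeff_smul, ridge_coeff_top n _ hdeg, Mk]
            simp only [smul_eq_mul]
            ring
          rw [Finset.sum_congr rfl (fun j _ => hstep j), ← Finset.mul_sum]
          have := congrFun hc' ⟨d 1, by omega⟩
          rw [Matrix.mulVec, dotProduct] at this
          rw [this]
          field_simp
        rw [hSc, sub_self]
      · have hP0 : MvPolynomial.coeff d P = 0 := hP d (by omega)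
        have hS0 : MvPolynomial.coeff d S = 0 := by
          rw [hS, MvPolynomial.coeff_sum]
          apply Finset.sum_eq_zero
          intro j _
          rw [MvPolynomial.coeff_smul, ridge_coeff_vanish n _ (by omega), smul_zero]
        rw [hP0, hS0, sub_zero]
    obtain ⟨c₀, hc₀supp, hc₀⟩ := ih (P - S) hQ
    refine ⟨fun j k => if k = n then (if hj : j ≤ n then c' ⟨j, by omega⟩ else 0) else c₀ j k,
      ?_, ?_⟩
    · intro j k hjk
      beta_reduce
      by_cases hkn : k = n
      · subst hkn
        rcases hjk with h | h
        · omega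
        · rw [if_pos rfl, dif_neg (by omega)]
      · rw [if_neg hkn]
        apply hc₀supp
        rcases hjk with h | h
        · left; omega
        · right; exact h
    · beta_reduce
      rw [Finset.sum_range_succ]
      have hrow : (∑ j ∈ Finset.range (n + 1),
          (if n = n then (if hj : j ≤ n then c' ⟨j, by omega⟩ else 0) else c₀ j n) •
            ridgePoly n ((j:ℝ) * π / ((n:ℝ) + 1))) = S := by
        rw [hS, Finset.sum_range]
        apply Finset.sum_congr rfl
        intro j _
        congr 1
        rw [if_pos rfl, dif_pos (by omega)]
      have hrest : (∑ k ∈ Finset.range n, ∑ j ∈ Finset.range (k + 1),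
          (if k = n then (if hj : j ≤ n then c' ⟨j, by omega⟩ else 0) else c₀ j k) •
            ridgePoly k ((j:ℝ) * π / ((k:ℝ) + 1))) = P - S := by
        rw [hc₀]
        apply Finset.sum_congr rfl
        intro k hk
        have hkn : k ≠ n := by
          have := Finset.mem_range.mp hk; omega
        apply Finset.sum_congr rfl
        intro j _
        rw [if_neg hkn]
      rw [hrow, hrest]
      ring

lemma uniq_rep (n : ℕ) (e : ℕ → ℕ → ℝ)
    (hsupp : ∀ j k : ℕ, n < k ∨ k < j → e j k = 0)
    (hsum : (∑ k ∈ Finset.range (n + 1), ∑ j ∈ Finset.range (k + 1),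
        e j k • ridgePoly k ((j:ℝ) * π / ((k:ℝ) + 1))) = 0) :
    ∀ j k : ℕ, e j k = 0 := by
  have key : ∀ K : ℕ, K ≤ n → (∀ k, K < k → ∀ j, e j k = 0) → ∀ j, e j K = 0 := by
    intro K hK hup
    have hvec : (Mk K).mulVec (fun j : Fin (K+1) => 2^K * e (j:ℕ) K) = 0 := by
      funext m
      have hdeg : Dmon K (m:ℕ) 0 + Dmon K (m:ℕ) 1 = K := by
        rw [Dmon_0, Dmon_1]
        have := m.isLt; omega
      have hco := congrArg (MvPolynomial.coeff (Dmon K (m:ℕ))) hsum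
      rw [MvPolynomial.coeff_zero, MvPolynomial.coeff_sum] at hco
      rw [Finset.sum_eq_single_of_mem K (Finset.mem_range.mpr (by omega))] at hco
      · rw [MvPolynomial.coeff_sum] at hco
        have hstep : ∀ j : Fin (K + 1),
            MvPolynomial.coeff (Dmon K (m:ℕ))
              (e (j:ℕ) K • ridgePoly K (((j:ℕ):ℝ) * π / ((K:ℝ) + 1)))
            = Mk K m j * (2^K * e (j:ℕ) K) := by
          intro j
          rw [MvPolynomial.coeff_smul, ridge_coeff_top K _ hdeg, Mk]
          simp only [smul_eq_mul]
          ring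
        rw [Finset.sum_range fun j => MvPolynomial.coeff (Dmon K (m:ℕ))
          (e j K • ridgePoly K ((j:ℝ) * π / ((K:ℝ) + 1)))] at hco
        rw [Finset.sum_congr rfl (fun j _ => hstep j)] at hco
        rw [show (0 : Fin (K+1) → ℝ) m = 0 from rfl, Matrix.mulVec, dotProduct, ← hco]
      · intro b hb hbK
        rw [MvPolynomial.coeff_sum]
        apply Finset.sum_eq_zero
        intro j _
        rcases Nat.lt_or_ge b K with hbl | hbg
        · rw [MvPolynomial.coeff_smul, ridge_coeff_vanish b _ (by omega), smul_zero]
        · simp [hup b (by omega) j]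
    have hz := Mk_mulVec_zero hvec
    intro j
    by_cases hj : j ≤ K
    · have := congrFun hz ⟨j, by omega⟩
      simp only [Pi.zero_apply] at this
      have h2 : (2:ℝ)^K ≠ 0 := by positivity
      have : (2:ℝ)^K * e j K = 0 := this
      rcases mul_eq_zero.mp this with h | h
      · exact absurd h h2
      · exact h
    · exact hsupp j K (Or.inr (by omega))
  have hall : ∀ t K : ℕ, n ≤ K + t → ∀ j, e j K = 0 := by
    intro t
    induction t with
    | zero =>
      intro K hK j
      rcases Nat.lt_or_ge n K with h | h
      · exact hsupp j K (Or.inl h)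
      · have hKn : K = n := by omega
        rw [hKn]
        exact key n le_rfl (fun k hk j' => hsupp j' k (Or.inl hk)) j
    | succ t iht =>
      intro K hK j
      by_cases h : n ≤ K + t
      · exact iht K h j
      · have hKn : K ≤ n := by omega
        exact key K hKn (fun k hk j' => iht k (by omega) j') j
  intro j k
  exact hall n k (by omega) j

/-- Every bivariate polynomial of total degree at most `n` is a unique linear
combination of the ridge polynomials `U_k(θ_{j,k}; ·)`, `0 ≤ j ≤ k ≤ n`,
where `θ_{j,k} = jπ/(k+1)`. -/
theorem ridge_basis (n : ℕ) (P : MvPolynomial (Fin 2) ℝ) (hP : P.totalDegree ≤ n) :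
    ∃! c : ℕ → ℕ → ℝ,
      (∀ j k : ℕ, n < k ∨ k < j → c j k = 0) ∧
      P = ∑ k ∈ Finset.range (n + 1), ∑ j ∈ Finset.range (k + 1),
        c j k • ridgePoly k (j * π / (k + 1)) := by
  obtain ⟨c, hcsupp, hcrep⟩ := exists_rep (n + 1) P
    (fun d hd => vanish_of_totalDegree_lt (by omega) hd)
  refine ⟨c, ⟨fun j k h => hcsupp j k (by omega), hcrep⟩, ?_⟩
  rintro c₂ ⟨h2s, h2r⟩
  have hzero : (∑ k ∈ Finset.range (n + 1), ∑ j ∈ Finset.range (k + 1),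
      (c₂ j k - c j k) • ridgePoly k ((j:ℝ) * π / ((k:ℝ) + 1))) = 0 := by
    have : (∑ k ∈ Finset.range (n + 1), ∑ j ∈ Finset.range (k + 1),
        (c₂ j k - c j k) • ridgePoly k ((j:ℝ) * π / ((k:ℝ) + 1)))
        = (∑ k ∈ Finset.range (n + 1), ∑ j ∈ Finset.range (k + 1),
            c₂ j k • ridgePoly k ((j:ℝ) * π / ((k:ℝ) + 1)))
          - (∑ k ∈ Finset.range (n + 1), ∑ j ∈ Finset.range (k + 1),
            c j k • ridgePoly k ((j:ℝ) * π / ((k:ℝ) + 1))) := by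
      rw [← Finset.sum_sub_distrib]
      apply Finset.sum_congr rfl
      intro k _
      rw [← Finset.sum_sub_distrib]
      apply Finset.sum_congr rfl
      intro j _
      rw [sub_smul]
    rw [this, ← h2r, ← hcrep, sub_self]
  have huniq := uniq_rep n (fun j k => c₂ j k - c j k)
    (fun j k h => by
      have h1 := h2s j k h
      have h2 : c j k = 0 := hcsupp j k (by omega)
      simp [h1, h2])
    hzero
  funext j k
  have h : c₂ j k - c j k = 0 := huniq j k
  linarith
end

section
/- Let m ≥ 2 and let t_0 < t_1 < … < t_m be real numbers with cos(π/(2m+1)) < t_0 and t_m < 1. Then the matrices Ξ_1(t), Ξ_2(t), …, Ξ_{m-1}(t) (built from Chebyshev polynomials of the second kind as below) are all nonsingular. -/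
open MeasureTheory Real Finset

/-- For `n = 2m`, the degree of the `i`-th entry of the column vector
`X_j(t) = (U_{2m}(t), U_{2m-2}(t), …, U_{2j}(t), U_{2m-1}(t), U_{2m-3}(t), …,
U_{2m-2j+1}(t))`. -/
def degE (m j : ℕ) (i : Fin (m + 1)) : ℕ :=
  if (i : ℕ) ≤ m - j then 2 * m - 2 * (i : ℕ)
  else 2 * m - 1 - 2 * ((i : ℕ) - (m - j + 1))

namespace ClusteredAux

/-- Sine combination. -/
noncomputable def fS {k : ℕ} (A : Fin k → ℕ) (c : Fin k → ℝ) (x : ℝ) : ℝ :=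
  ∑ i, c i * Real.sin ((A i : ℝ) * x)

/-- First derivative of `fS`. -/
noncomputable def fS1 {k : ℕ} (A : Fin k → ℕ) (c : Fin k → ℝ) (x : ℝ) : ℝ :=
  ∑ i, c i * ((A i : ℝ) * Real.cos ((A i : ℝ) * x))

/-- Second derivative of `fS`. -/
noncomputable def fS2 {k : ℕ} (A : Fin k → ℕ) (c : Fin k → ℝ) (x : ℝ) : ℝ :=
  ∑ i, c i * (-((A i : ℝ) * ((A i : ℝ) * Real.sin ((A i : ℝ) * x))))

lemma hasDerivAt_fS {k : ℕ} (A : Fin k → ℕ) (c : Fin k → ℝ) (x : ℝ) :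
    HasDerivAt (fS A c) (fS1 A c x) x := by
  unfold fS fS1
  apply HasDerivAt.fun_sum
  intro i _
  have h : HasDerivAt (fun y : ℝ => (A i : ℝ) * y) ((A i : ℝ)) x := by
    simpa using (hasDerivAt_id x).const_mul ((A i : ℝ))
  simpa [mul_comm, mul_assoc, mul_left_comm] using h.sin.const_mul (c i)

lemma hasDerivAt_fS1 {k : ℕ} (A : Fin k → ℕ) (c : Fin k → ℝ) (x : ℝ) :
    HasDerivAt (fS1 A c) (fS2 A c x) x := by
  unfold fS1 fS2
  apply HasDerivAt.fun_sum
  intro i _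
  have h : HasDerivAt (fun y : ℝ => (A i : ℝ) * y) ((A i : ℝ)) x := by
    simpa using (hasDerivAt_id x).const_mul ((A i : ℝ))
  have h2 := (h.cos.const_mul ((A i : ℝ))).const_mul (c i)
  simpa [mul_comm, mul_assoc, mul_left_comm] using h2

/-- The auxiliary positive function `u`. -/
noncomputable def uF (a d : ℝ) (y : ℝ) : ℝ := Real.cos (a * (y - d))

noncomputable def uF1 (a d : ℝ) (y : ℝ) : ℝ := -(a * Real.sin (a * (y - d)))

lemma hasDerivAt_uF (a d x : ℝ) : HasDerivAt (uF a d) (uF1 a d x) x := by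
  unfold uF uF1
  have h : HasDerivAt (fun y : ℝ => a * (y - d)) a x := by
    simpa using ((hasDerivAt_id x).sub_const d).const_mul a
  simpa [mul_comm, neg_mul] using h.cos

lemma hasDerivAt_uF1 (a d x : ℝ) :
    HasDerivAt (uF1 a d) (-(a * (a * uF a d x))) x := by
  unfold uF1 uF
  have h : HasDerivAt (fun y : ℝ => a * (y - d)) a x := by
    simpa using ((hasDerivAt_id x).sub_const d).const_mul a
  have h2 := (h.sin.const_mul a).fun_neg
  simpa [mul_comm, mul_assoc, mul_left_comm] using h2

/-- Wronskian-type numerator. -/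
noncomputable def phiF {k : ℕ} (A : Fin k → ℕ) (c : Fin k → ℝ) (a d : ℝ) (y : ℝ) : ℝ :=
  fS1 A c y * uF a d y - fS A c y * uF1 a d y

lemma hasDerivAt_phiF {k : ℕ} (A : Fin k → ℕ) (c : Fin k → ℝ) (a d x : ℝ) :
    HasDerivAt (phiF A c a d) (uF a d x * (fS2 A c x + (a * a) * fS A c x)) x := by
  have h := ((hasDerivAt_fS1 A c x).mul (hasDerivAt_uF a d x)).sub
    ((hasDerivAt_fS A c x).mul (hasDerivAt_uF1 a d x))
  exact h.congr_deriv (by ring)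

/-- Iterated Rolle: a function vanishing at `n+1` increasing points has `n`
increasing zeros of its derivative, interlacing them. -/
lemma rolle_chain {n : ℕ} {lo hi : ℝ} (g D : ℝ → ℝ) (s : Fin (n + 1) → ℝ)
    (hs : StrictMono s) (hmem : ∀ i, s i ∈ Set.Icc lo hi)
    (hd : ∀ x ∈ Set.Icc lo hi, HasDerivAt g (D x) x)
    (hz : ∀ i, g (s i) = 0) :
    ∃ η : Fin n → ℝ, StrictMono η ∧
      (∀ i, η i ∈ Set.Ioo (s 0) (s (Fin.last n))) ∧ ∀ i, D (η i) = 0 := by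
  have key : ∀ i : Fin n, ∃ x ∈ Set.Ioo (s i.castSucc) (s i.succ), D x = 0 := by
    intro i
    have hab : s i.castSucc < s i.succ := hs (Fin.castSucc_lt_succ (i := i))
    have hsub : Set.Icc (s i.castSucc) (s i.succ) ⊆ Set.Icc lo hi :=
      Set.Icc_subset_Icc (hmem _).1 (hmem _).2
    exact exists_hasDerivAt_eq_zero hab
      (fun x hx => (hd x (hsub hx)).continuousAt.continuousWithinAt)
      (by rw [hz, hz])
      (fun x hx => hd x (hsub (Set.Ioo_subset_Icc_self hx)))
  choose η hη hD using key
  refine ⟨η, ?_, ?_, hD⟩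
  · intro i jj hij
    have h1 : η i < s i.succ := (hη i).2
    have h2 : s i.succ ≤ s jj.castSucc := by
      apply hs.monotone
      rw [Fin.le_def]
      simp only [Fin.val_succ, Fin.coe_castSucc]
      exact hij
    exact h1.trans_le (h2.trans (hη jj).1.le)
  · intro i
    exact ⟨lt_of_le_of_lt (hs.monotone (Fin.zero_le _)) (hη i).1,
      lt_of_lt_of_le (hη i).2 (hs.monotone (Fin.le_last _))⟩

lemma strictMono_cons {n : ℕ} {x : ℝ} {θ : Fin (n + 1) → ℝ} (hθ : StrictMono θ)
    (hx : x < θ 0) : StrictMono (Fin.cons x θ : Fin (n + 2) → ℝ) := by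
  rw [Fin.strictMono_iff_lt_succ]
  intro i
  induction i using Fin.cases with
  | zero => simpa using hx
  | succ i =>
    rw [← Fin.succ_castSucc]
    simpa [Fin.cons_succ] using hθ (Fin.castSucc_lt_succ (i := i))

end ClusteredAux

namespace ClusteredAux

/-- Key zero-counting lemma: a nontrivial linear combination of sines with
distinct integer frequencies `1 ≤ A i ≤ N` cannot vanish at `k` distinct
points of `(0, π/N)`. -/
lemma zero_bound (N : ℕ) :
    ∀ (k : ℕ) (A : Fin k → ℕ), Function.Injective A → (∀ i, 1 ≤ A i) →
      (∀ i, A i ≤ N) →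
    ∀ (c : Fin k → ℝ) (θ : Fin k → ℝ), StrictMono θ →
      (∀ r, θ r ∈ Set.Ioo (0 : ℝ) (π / N)) →
      (∀ r, fS A c (θ r) = 0) → c = 0 := by
  intro k
  induction k with
  | zero =>
    intro A _ _ _ c θ _ _ _
    funext i; exact i.elim0
  | succ k ih =>
    intro A hAinj hA1 hAN c θ hθ hmem hzero
    have hπN : 0 < π / (N : ℝ) := lt_trans (hmem 0).1 (hmem 0).2
    have hNR : 0 < (N : ℝ) := by
      rcases Nat.eq_zero_or_pos N with h | h
      · rw [h] at hπN; norm_num at hπN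
      · exact_mod_cast h
    obtain ⟨i₀, -, hi₀⟩ := Finset.exists_min_image Finset.univ A ⟨0, Finset.mem_univ 0⟩
    have hmain : ∀ i, i ≠ i₀ → c i = 0 := by
      cases k with
      | zero =>
        intro i hi
        have hv1 := i.isLt
        have hv2 := i₀.isLt
        exact absurd (Fin.ext (by omega)) hi
      | succ k' =>
        intro i hi
        set a : ℕ := A i₀ with ha
        have haR1 : (1 : ℝ) ≤ (a : ℝ) := by exact_mod_cast hA1 i₀
        have haN : a < N := by
          have hle : A (i₀.succAbove 0) ≤ N := hAN _
          have hlt : a < A (i₀.succAbove 0) :=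
            lt_of_le_of_ne (hi₀ _ (Finset.mem_univ _))
              (fun h => Fin.succAbove_ne i₀ 0 (hAinj h.symm))
          omega
        set d : ℝ := π / (2 * N) with hd
        have hdpos : 0 < d := by
          rw [hd]; apply div_pos Real.pi_pos; nlinarith
        set hi' : ℝ := θ (Fin.last (k' + 1)) with hhi
        have hiub : hi' < π / N := (hmem _).2
        have hipos : 0 < hi' := (hmem _).1
        have h2d : π / (N : ℝ) = 2 * d := by
          rw [hd]; field_simp
        have hadlt : (a : ℝ) * d < π / 2 := by
          have h2 : (a : ℝ) < (N : ℝ) := by exact_mod_cast haN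
          have h3 : (a : ℝ) * d < (N : ℝ) * d := mul_lt_mul_of_pos_right h2 hdpos
          have h4 : (N : ℝ) * d = π / 2 := by
            rw [hd]; field_simp
          linarith
        have hupos : ∀ x ∈ Set.Icc (0 : ℝ) hi', 0 < uF a d x := by
          intro x hx
          apply Real.cos_pos_of_mem_Ioo
          constructor
          · have hge : -((a : ℝ) * d) ≤ (a : ℝ) * (x - d) := by
              nlinarith [hx.1]
            linarith
          · have hxd : x - d < d := by
              have hxlt : x < π / N := lt_of_le_of_lt hx.2 hiub
              rw [h2d] at hxlt; linarith
            have : (a : ℝ) * (x - d) < (a : ℝ) * d :=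
              mul_lt_mul_of_pos_left hxd (by linarith)
            linarith
        -- the function F = fS/u vanishes at 0 and at all θ r
        set s : Fin (k' + 3) → ℝ := Fin.cons 0 θ with hs
        have hsmono : StrictMono s := strictMono_cons hθ (hmem 0).1
        have hsmem : ∀ i2, s i2 ∈ Set.Icc (0 : ℝ) hi' := by
          intro i2
          induction i2 using Fin.cases with
          | zero => exact ⟨le_rfl, hipos.le⟩
          | succ r =>
            refine ⟨(hmem r).1.le, ?_⟩
            simp only [hs, Fin.cons_succ]
            exact hθ.monotone (Fin.le_last r)
        have hslast : s (Fin.last (k' + 2)) = hi' := by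
          rw [hs, hhi, ← Fin.succ_last, Fin.cons_succ]
        have hs0 : s 0 = 0 := rfl
        have hz1 : ∀ i2, (fun y => fS A c y / uF a d y) (s i2) = 0 := by
          intro i2
          induction i2 using Fin.cases with
          | zero =>
            simp only [hs, Fin.cons_zero, fS]
            simp
          | succ r =>
            simp only [hs, Fin.cons_succ]
            rw [hzero r, zero_div]
        have hd1 : ∀ x ∈ Set.Icc (0 : ℝ) hi',
            HasDerivAt (fun y => fS A c y / uF a d y)
              ((fS1 A c x * uF a d x - fS A c x * uF1 a d x) / (uF a d x) ^ 2) x :=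
          fun x hx => (hasDerivAt_fS A c x).div (hasDerivAt_uF a d x)
            (ne_of_gt (hupos x hx))
        obtain ⟨ξ, hξmono, hξmem, hξD⟩ := rolle_chain _ _ s hsmono hsmem hd1 hz1
        have hξmem' : ∀ i2, ξ i2 ∈ Set.Ioo (0 : ℝ) hi' := by
          intro i2
          have := hξmem i2
          rwa [hs0, hslast] at this
        have hφz : ∀ i2, phiF A c a d (ξ i2) = 0 := by
          intro i2
          have hne : (uF a d (ξ i2)) ^ 2 ≠ 0 :=
            pow_ne_zero 2 (ne_of_gt (hupos _ (Set.Ioo_subset_Icc_self (hξmem' i2))))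
          exact (div_eq_zero_iff.mp (hξD i2)).resolve_right hne
        obtain ⟨η, hηmono, hηmem, hηD⟩ := rolle_chain (phiF A c a d)
          (fun x => uF a d x * (fS2 A c x + ((a : ℝ) * (a : ℝ)) * fS A c x)) ξ hξmono
          (fun i2 => Set.Ioo_subset_Icc_self (hξmem' i2))
          (fun x _ => hasDerivAt_phiF A c a d x) hφz
        have hηmem' : ∀ r, η r ∈ Set.Ioo (0 : ℝ) (π / (N : ℝ)) := by
          intro r
          have h := hηmem r
          exact ⟨lt_trans (hξmem' 0).1 h.1,
            lt_trans (lt_trans h.2 (hξmem' (Fin.last _)).2) hiub⟩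
        have hηzero : ∀ r, fS (fun i2 => A (i₀.succAbove i2))
            (fun i2 => c (i₀.succAbove i2) *
              (((a : ℝ)) * (a : ℝ) - (A (i₀.succAbove i2) : ℝ) * (A (i₀.succAbove i2) : ℝ)))
            (η r) = 0 := by
          intro r
          have hu : uF a d (η r) ≠ 0 := by
            apply ne_of_gt
            apply hupos
            have h := hηmem r
            exact ⟨(lt_trans (hξmem' 0).1 h.1).le,
              (lt_trans h.2 (hξmem' (Fin.last _)).2).le⟩
          have h2 : fS2 A c (η r) + ((a : ℝ) * (a : ℝ)) * fS A c (η r) = 0 := by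
            rcases mul_eq_zero.mp (hηD r) with h | h
            · exact absurd h hu
            · exact h
          have h3 : fS2 A c (η r) + ((a : ℝ) * (a : ℝ)) * fS A c (η r)
              = ∑ i2 : Fin (k' + 2), (c i2 * ((a : ℝ) * (a : ℝ) - (A i2 : ℝ) * (A i2 : ℝ)))
                  * Real.sin ((A i2 : ℝ) * η r) := by
            unfold fS fS2
            rw [Finset.mul_sum, ← Finset.sum_add_distrib]
            exact Finset.sum_congr rfl fun i2 _ => by ring
          rw [h3, Fin.sum_univ_succAbove _ i₀] at h2
          unfold fS
          rw [← ha] at h2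
          simpa using h2
        have hc' := ih (fun i2 => A (i₀.succAbove i2))
          (hAinj.comp (Fin.succAbove_right_injective))
          (fun i2 => hA1 _) (fun i2 => hAN _)
          (fun i2 => c (i₀.succAbove i2) *
            ((a : ℝ) * (a : ℝ) - (A (i₀.succAbove i2) : ℝ) * (A (i₀.succAbove i2) : ℝ)))
          η hηmono hηmem' hηzero
        obtain ⟨z, hz⟩ := Fin.exists_succAbove_eq hi
        have hcz := congrFun hc' z
        rw [hz] at hcz
        have hne : (a : ℝ) * (a : ℝ) - (A i : ℝ) * (A i : ℝ) ≠ 0 := by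
          have hlt : a < A i :=
            lt_of_le_of_ne (hi₀ i (Finset.mem_univ i))
              (fun h => hi ((hAinj h).symm))
          have hltR : (a : ℝ) < (A i : ℝ) := by exact_mod_cast hlt
          nlinarith [Nat.cast_nonneg (α := ℝ) a]
        simpa [hne] using hcz
    -- now only the minimal frequency remains
    have hcol : fS A c (θ 0) = c i₀ * Real.sin ((A i₀ : ℝ) * θ 0) := by
      unfold fS
      apply Finset.sum_eq_single i₀
      · intro b _ hb
        rw [hmain b hb, zero_mul]
      · intro h
        exact absurd (Finset.mem_univ i₀) h
    have hsin : 0 < Real.sin ((A i₀ : ℝ) * θ 0) := by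
      apply Real.sin_pos_of_pos_of_lt_pi
      · apply mul_pos _ (hmem 0).1
        have := hA1 i₀
        exact_mod_cast Nat.lt_of_lt_of_le Nat.zero_lt_one this
      · calc (A i₀ : ℝ) * θ 0 ≤ (N : ℝ) * θ 0 := by
              apply mul_le_mul_of_nonneg_right _ (hmem 0).1.le
              exact_mod_cast hAN i₀
          _ < (N : ℝ) * (π / N) := mul_lt_mul_of_pos_left (hmem 0).2 hNR
          _ = π := by field_simp
    have hci₀ : c i₀ = 0 := by
      have h := hzero 0
      rw [hcol] at h
      exact (mul_eq_zero.mp h).resolve_right (ne_of_gt hsin)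
    funext i2
    by_cases h : i2 = i₀
    · rw [h]; exact hci₀
    · exact hmain i2 h

end ClusteredAux

/-- If `cos(π/(2m+1)) < t_0 < t_1 < … < t_m < 1`, then the matrices
`Ξ_1(t), …, Ξ_{m-1}(t)` are all nonsingular. -/
theorem clustered_points_nonsingular (m : ℕ) (hm : 2 ≤ m) (t : Fin (m + 1) → ℝ)
    (hmono : StrictMono t)
    (h0 : Real.cos (π / (2 * m + 1)) < t 0)
    (h1 : t (Fin.last m) < 1) :
    ∀ j, 1 ≤ j → j ≤ m - 1 →
      (Matrix.of fun i k : Fin (m + 1) => chebU (degE m j i) (t k)).det ≠ 0 := by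
  intro j hj1 hj2 hdet
  obtain ⟨c, hc0, hvm⟩ := Matrix.exists_vecMul_eq_zero_iff.mpr hdet
  apply hc0
  set N : ℕ := 2 * m + 1 with hN
  have hNcast : ((N : ℕ) : ℝ) = 2 * (m : ℝ) + 1 := by rw [hN]; push_cast; ring
  have hNR : (0 : ℝ) < (N : ℝ) := by rw [hNcast]; positivity
  have hπNpos : 0 < π / (N : ℝ) := div_pos Real.pi_pos hNR
  have hπNle : π / (N : ℝ) ≤ π := by
    apply div_le_self Real.pi_pos.le
    rw [hNcast]; nlinarith [Nat.cast_nonneg (α := ℝ) m]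
  have htlt1 : ∀ k, t k < 1 :=
    fun k => lt_of_le_of_lt (hmono.monotone (Fin.le_last k)) h1
  have htgt : ∀ k, Real.cos (π / (N : ℝ)) < t k := by
    intro k
    rw [hNcast]
    exact lt_of_lt_of_le h0 (hmono.monotone (Fin.zero_le k))
  have htmem : ∀ k, t k ∈ Set.Icc (-1 : ℝ) 1 := by
    intro k
    constructor
    · have := Real.neg_one_le_cos (π / (N : ℝ))
      linarith [htgt k]
    · exact (htlt1 k).le
  have hcosmem : Real.cos (π / (N : ℝ)) ∈ Set.Icc (-1 : ℝ) 1 :=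
    ⟨Real.neg_one_le_cos _, Real.cos_le_one _⟩
  have harccos_mem : ∀ k, Real.arccos (t k) ∈ Set.Ioo 0 (π / (N : ℝ)) := by
    intro k
    constructor
    · exact Real.arccos_pos.mpr (htlt1 k)
    · have h2 : Real.arccos (t k) < Real.arccos (Real.cos (π / (N : ℝ))) :=
        Real.strictAntiOn_arccos hcosmem (htmem k) (htgt k)
      rwa [Real.arccos_cos hπNpos.le hπNle] at h2
  have hθmono : StrictMono (fun r : Fin (m + 1) => Real.arccos (t r.rev)) := by
    intro r r' hrr'
    have h2 : r'.rev < r.rev := by rwa [Fin.rev_lt_rev]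
    exact Real.strictAntiOn_arccos (htmem _) (htmem _) (hmono h2)
  have hzero : ∀ r : Fin (m + 1),
      ClusteredAux.fS (fun i => degE m j i + 1) c (Real.arccos (t r.rev)) = 0 := by
    intro r
    have hcol := congrFun hvm r.rev
    simp only [Matrix.vecMul, dotProduct, Matrix.of_apply, Pi.zero_apply] at hcol
    have hcx : Real.cos (Real.arccos (t r.rev)) = t r.rev :=
      Real.cos_arccos (htmem _).1 (htmem _).2
    unfold ClusteredAux.fS
    have hexp : ∀ i : Fin (m + 1),
        c i * Real.sin (((degE m j i + 1 : ℕ) : ℝ) * Real.arccos (t r.rev))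
          = (c i * chebU (degE m j i) (t r.rev)) * Real.sin (Real.arccos (t r.rev)) := by
      intro i
      have hU := Polynomial.Chebyshev.U_real_cos (Real.arccos (t r.rev)) (degE m j i : ℤ)
      rw [hcx] at hU
      have hcast : (((degE m j i : ℤ) : ℝ) + 1) = ((degE m j i + 1 : ℕ) : ℝ) := by
        push_cast; ring
      rw [hcast] at hU
      rw [← hU]
      unfold chebU
      ring
    rw [Finset.sum_congr rfl fun i _ => hexp i, ← Finset.sum_mul, hcol, zero_mul]
  have hinj : Function.Injective (fun i : Fin (m + 1) => degE m j i + 1) := by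
    intro i1 i2 h
    have hv1 := i1.isLt
    have hv2 := i2.isLt
    simp only [degE] at h
    apply Fin.ext
    split_ifs at h <;> omega
  have hle : ∀ i : Fin (m + 1), degE m j i + 1 ≤ N := by
    intro i
    have hv := i.isLt
    rw [hN]
    simp only [degE]
    split_ifs <;> omega
  exact ClusteredAux.zero_bound N (m + 1) (fun i => degE m j i + 1) hinj
    (fun i => Nat.le_add_left 1 _) hle c
    (fun r => Real.arccos (t r.rev)) hθmono (fun r => harccos_mem _) hzero
end

section
/- Let m ≥ 1 and let η_{j,2m} := cos(jπ/(2m+1)) for 1 ≤ j ≤ 2m (the zeros of the Chebyshev polynomial U_{2m}). Then for all integers j, k with 1 ≤ j ≤ m and 1 ≤ k ≤ m: U_{2m-2j}(η_{2k,2m}) = − U_{2j-1}(η_{2k,2m}). -/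
open Real

/-- At the even-indexed zeros `η_{2k,2m} = cos(2kπ/(2m+1))` of `U_{2m}`,
one has `U_{2m-2j}(η_{2k,2m}) = -U_{2j-1}(η_{2k,2m})` for `1 ≤ j, k ≤ m`. -/
theorem chebU_even_zero_relation (m j k : ℕ) (hm : 1 ≤ m)
    (hj1 : 1 ≤ j) (hj : j ≤ m) (hk1 : 1 ≤ k) (hk : k ≤ m) :
    chebU (2 * m - 2 * j) (Real.cos (2 * k * π / (2 * m + 1))) =
      -chebU (2 * j - 1) (Real.cos (2 * k * π / (2 * m + 1))) := by
  set θ : ℝ := 2 * k * π / (2 * m + 1) with hθ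
  have hden : (2 * (m:ℝ) + 1) ≠ 0 := by positivity
  have hsin : Real.sin θ ≠ 0 := by
    apply ne_of_gt
    apply Real.sin_pos_of_pos_of_lt_pi
    · apply div_pos
      · have : (0:ℝ) < (k:ℝ) := by exact_mod_cast hk1
        positivity
      · positivity
    · rw [div_lt_iff₀ (by positivity)]
      have hk' : (k:ℝ) ≤ m := by exact_mod_cast hk
      nlinarith [Real.pi_pos]
  have h1 := Polynomial.Chebyshev.U_real_cos θ ((2 * m - 2 * j : ℕ) : ℤ)
  have h2 := Polynomial.Chebyshev.U_real_cos θ ((2 * j - 1 : ℕ) : ℤ)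
  have e1 : (((2 * m - 2 * j : ℕ) : ℤ) : ℝ) + 1 = 2 * m - 2 * j + 1 := by
    have : (2 * m - 2 * j : ℕ) = 2 * m - 2 * j := rfl
    push_cast [Nat.sub_add_cancel, Nat.cast_sub (by omega : 2 * j ≤ 2 * m)]
    ring
  have e2 : (((2 * j - 1 : ℕ) : ℤ) : ℝ) + 1 = 2 * j := by
    push_cast [Nat.cast_sub (by omega : 1 ≤ 2 * j)]
    ring
  have key : Real.sin ((2 * (m:ℝ) - 2 * j + 1) * θ) = - Real.sin ((2 * (j:ℝ)) * θ) := by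
    have hθπ : (2 * (m:ℝ) + 1) * θ = 2 * k * π := by
      rw [hθ]; field_simp
    have : (2 * (m:ℝ) - 2 * j + 1) * θ = 2 * k * π - (2 * j) * θ := by
      rw [← hθπ]; ring
    have h2k : (2:ℝ) * k * π = (2 * k : ℕ) * π := by push_cast; ring
    have h2k' : (2:ℝ) * k * π = (k : ℕ) * (2 * π) := by push_cast; ring
    rw [this, Real.sin_sub, h2k, Real.sin_nat_mul_pi]
    rw [← h2k, h2k', Real.cos_nat_mul_two_pi]
    ring
  rw [e1] at h1
  rw [e2] at h2
  unfold chebU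
  refine mul_right_cancel₀ hsin ?_
  rw [neg_mul, h1, h2, key]
end

section
/- Let m ≥ 0 and let t_0, t_1, …, t_m be distinct points in (-1,1) forming an asymmetric set. Then the (m+1)×(m+1) matrix with entries U_{2l}(t_k), 0 ≤ l ≤ m, 0 ≤ k ≤ m (Chebyshev polynomials of the second kind of even degree evaluated at the points t_k), is nonsingular. -/
open Real

open Polynomial in
/-- Auxiliary polynomials with `P l (x^2) = U_{2l}(x)`. -/
noncomputable def chebP : ℕ → Polynomial ℝ
  | 0 => 1
  | 1 => C 4 * X + C (-1)
  | (n + 2) => (C 4 * X + C (-2)) * chebP (n + 1) - chebP n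

open Polynomial Polynomial.Chebyshev in
lemma U_add_four (n : ℤ) :
    U ℝ (n + 4) = (4 * X ^ 2 - 2) * U ℝ (n + 2) - U ℝ n := by
  have h1 := U_add_two ℝ (n + 2)
  have h2 := U_add_two ℝ (n + 1)
  have h3 := U_add_two ℝ n
  have e1 : n + 2 + 2 = n + 4 := by ring
  have e2 : n + 1 + 2 = n + 3 := by ring
  have e3 : n + 1 + 1 = n + 2 := by ring
  have e4 : n + 2 + 1 = n + 3 := by ring
  rw [e1, e4] at h1
  rw [e2, e3] at h2
  linear_combination h1 + 2 * X * h2 + h3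

open Polynomial in
lemma chebP_eval (l : ℕ) (x : ℝ) :
    (chebP l).eval (x ^ 2) = (Chebyshev.U ℝ (2 * l : ℤ)).eval x := by
  induction l using Nat.strong_induction_on with
  | _ l ih =>
    match l with
    | 0 => simp [chebP, Chebyshev.U_zero]
    | 1 =>
      have : (2 : ℤ) * (1 : ℕ) = 2 := by norm_num
      rw [this, Chebyshev.U_two]
      simp [chebP]
      ring
    | (n + 2) =>
      have h1 := ih (n + 1) (by omega)
      have h2 := ih n (by omega)
      have e' : (2 * ((n + 2 : ℕ) : ℤ)) = (2 * (n : ℤ)) + 4 := by push_cast; ring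
      have e'' : (2 * ((n + 1 : ℕ) : ℤ)) = (2 * (n : ℤ)) + 2 := by push_cast; ring
      have e3 : (2 * ((n : ℕ) : ℤ)) = (2 * (n : ℤ)) := rfl
      rw [e', U_add_four]
      rw [e''] at h1
      rw [e3] at h2
      have hr : chebP (n + 2) = (C 4 * X + C (-2)) * chebP (n + 1) - chebP n := rfl
      rw [hr]
      simp only [eval_sub, eval_mul, eval_add, eval_C, eval_X, eval_pow, eval_ofNat] at *
      rw [h1, h2]
      ring

open Polynomial in
lemma chebP_deg (l : ℕ) :
    (chebP l).natDegree = l ∧ (chebP l).leadingCoeff = 4 ^ l := by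
  induction l using Nat.strong_induction_on with
  | _ l ih =>
    match l with
    | 0 => simp [chebP]
    | 1 =>
      have hr : chebP 1 = C (4:ℝ) * X + C (-1) := rfl
      rw [hr]
      constructor
      · exact natDegree_linear (by norm_num)
      · rw [leadingCoeff_linear (by norm_num)]; norm_num
    | (n + 2) =>
      obtain ⟨hd1, hl1⟩ := ih (n + 1) (by omega)
      obtain ⟨hd2, hl2⟩ := ih n (by omega)
      have hP1 : chebP (n + 1) ≠ 0 := by
        intro h
        rw [h] at hl1
        simp at hl1
        exact absurd hl1.symm (by positivity)
      have hq : (C (4:ℝ) * X + C (-2)) ≠ 0 := by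
        intro h
        have := natDegree_linear (a := (4:ℝ)) (b := -2) (by norm_num)
        rw [h] at this; simp at this
      have hdm : ((C (4:ℝ) * X + C (-2)) * chebP (n + 1)).natDegree = n + 2 := by
        rw [natDegree_mul hq hP1, natDegree_linear (by norm_num), hd1]
        omega
      have hlm : ((C (4:ℝ) * X + C (-2)) * chebP (n + 1)).leadingCoeff = 4 ^ (n + 2) := by
        rw [leadingCoeff_mul, leadingCoeff_linear (by norm_num), hl1]
        ring
      have hdlt : (chebP n).natDegree < ((C (4:ℝ) * X + C (-2)) * chebP (n + 1)).natDegree := by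
        omega
      have hdeglt : (chebP n).degree < ((C (4:ℝ) * X + C (-2)) * chebP (n + 1)).degree := by
        apply degree_lt_degree
        omega
      have hr : chebP (n + 2) = (C 4 * X + C (-2)) * chebP (n + 1) - chebP n := rfl
      rw [hr]
      exact ⟨by rw [natDegree_sub_eq_left_of_natDegree_lt hdlt, hdm],
        by rw [leadingCoeff_sub_of_degree_lt hdeglt, hlm]⟩

/-- If `t_0, …, t_m` are distinct points of `(-1,1)` forming an asymmetric set,
then the matrix `(U_{2l}(t_k))_{0 ≤ l,k ≤ m}` is nonsingular. -/
theorem even_chebyshev_matrix_nonsingular (m : ℕ) (t : Fin (m + 1) → ℝ)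
    (ht : ∀ k, t k ∈ Set.Ioo (-1 : ℝ) 1)
    (hdist : Function.Injective t)
    (hasym : ∀ i j, i ≠ j → t i ≠ -t j) :
    (Matrix.of fun l k : Fin (m + 1) => chebU (2 * (l : ℕ)) (t k)).det ≠ 0 := by
  classical
  set v : Fin (m + 1) → ℝ := fun k => t k ^ 2 with hv
  have hvinj : Function.Injective v := by
    intro i j hij
    simp only [hv] at hij
    have : (t i - t j) * (t i + t j) = 0 := by ring_nf; linarith [hij]
    rcases mul_eq_zero.mp this with h | h
    · exact hdist (by linarith)
    · by_contra hne
      exact hasym i j hne (by linarith)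
  have key : (Matrix.of fun l k : Fin (m + 1) => chebU (2 * (l : ℕ)) (t k)) =
      (Matrix.of fun i j : Fin (m + 1) => (chebP (j : ℕ)).eval (v i)).transpose := by
    ext l k
    simp only [Matrix.transpose_apply, Matrix.of_apply]
    show chebU (2 * (l : ℕ)) (t k) = (chebP (l : ℕ)).eval (t k ^ 2)
    rw [chebP_eval]
    unfold chebU
    norm_num
  rw [key, Matrix.det_transpose,
    Matrix.eval_matrixOfPolynomials_eq_vandermonde_mul_matrixOfPolynomials v
      (fun j => chebP (j : ℕ)) (fun i => le_of_eq (chebP_deg (i : ℕ)).1),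
    Matrix.det_mul]
  apply mul_ne_zero
  · exact Matrix.det_vandermonde_ne_zero_iff.mpr hvinj
  · have htri : (Matrix.of fun i j : Fin (m + 1) =>
        (chebP (j : ℕ)).coeff (i : ℕ)).BlockTriangular id := by
      intro i j hij
      simp only [Matrix.of_apply]
      apply Polynomial.coeff_eq_zero_of_natDegree_lt
      rw [(chebP_deg (j : ℕ)).1]
      exact hij
    rw [Matrix.det_of_upperTriangular htri]
    apply Finset.prod_ne_zero_iff.mpr
    intro i _
    simp only [Matrix.of_apply, Matrix.diag_apply]
    have h := chebP_deg (i : ℕ)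
    have hc : (chebP (i : ℕ)).coeff (i : ℕ) = 4 ^ (i : ℕ) := by
      have h2 := h.2
      rwa [Polynomial.leadingCoeff, h.1] at h2
    rw [hc]
    positivity
end

section
/- Let m ≥ 1 and let t_k := cos(2kπ/(2m+1)) for k = 1, …, m. Then the m×m matrix with entries U_{2i-1}(t_k), 1 ≤ i ≤ m, 1 ≤ k ≤ m (Chebyshev polynomials of the second kind of odd degree evaluated at the points t_k), is nonsingular. -/
open Real

open Polynomial Polynomial.Chebyshev Matrix

lemma U_natDegree_le' (n : ℕ) : (U ℝ (n : ℤ)).natDegree ≤ n := by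
  induction n using Nat.strong_induction_on with
  | _ n ih =>
    match n with
    | 0 => simp
    | 1 => simp [U_one]
    | (n + 2) =>
      rw [show ((n + 2 : ℕ) : ℤ) = (n : ℤ) + 2 by push_cast; ring, U_add_two]
      refine (natDegree_sub_le _ _).trans ?_
      have h1 : (2 * X * U ℝ ((n:ℤ) + 1)).natDegree ≤ n + 2 := by
        refine (natDegree_mul_le).trans ?_
        have : (2 * X : ℝ[X]).natDegree ≤ 1 :=
          (natDegree_mul_le).trans (by simp)
        have h2 : (U ℝ ((n:ℤ) + 1)).natDegree ≤ n + 1 := by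
          have := ih (n + 1) (by omega)
          rwa [show ((n + 1 : ℕ) : ℤ) = (n : ℤ) + 1 by push_cast; ring] at this
        omega
      have h0 : (U ℝ (n : ℤ)).natDegree ≤ n := ih n (by omega)
      omega

lemma U_coeff' (n : ℕ) : (U ℝ (n : ℤ)).coeff n = 2 ^ n := by
  induction n using Nat.strong_induction_on with
  | _ n ih =>
    match n with
    | 0 => simp
    | 1 => simp [U_one, coeff_mul_X]
    | (n + 2) =>
      rw [show ((n + 2 : ℕ) : ℤ) = (n : ℤ) + 2 by push_cast; ring, U_add_two]
      have e1 : (2 * X * U ℝ ((n:ℤ) + 1)) = C 2 * (X * U ℝ ((n:ℤ) + 1)) := by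
        rw [map_ofNat, mul_assoc]
      rw [coeff_sub, e1, coeff_C_mul, coeff_X_mul]
      have h1 : (U ℝ ((n:ℤ) + 1)).coeff (n + 1) = 2 ^ (n + 1) := by
        have := ih (n + 1) (by omega)
        rwa [show ((n + 1 : ℕ) : ℤ) = (n : ℤ) + 1 by push_cast; ring] at this
      have h0 : (U ℝ (n : ℤ)).coeff (n + 2) = 0 :=
        coeff_eq_zero_of_natDegree_lt (lt_of_le_of_lt (U_natDegree_le' n) (by omega))
      rw [h1, h0]
      ring

lemma U_eval_neg' (n : ℕ) (x : ℝ) :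
    (U ℝ (n : ℤ)).eval (-x) = (-1) ^ n * (U ℝ (n : ℤ)).eval x := by
  induction n using Nat.strong_induction_on with
  | _ n ih =>
    match n with
    | 0 => simp
    | 1 => simp [U_one]
    | (n + 2) =>
      rw [show ((n + 2 : ℕ) : ℤ) = (n : ℤ) + 2 by push_cast; ring, U_add_two]
      have h1 := ih (n + 1) (by omega)
      have h0 := ih n (by omega)
      rw [show ((n + 1 : ℕ) : ℤ) = (n : ℤ) + 1 by push_cast; ring] at h1
      simp only [eval_sub, eval_mul, eval_ofNat, eval_X, h1, h0, pow_succ]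
      ring

/-- For `t_k = cos(2kπ/(2m+1))`, `1 ≤ k ≤ m`, the `m × m` matrix
`(U_{2i-1}(t_k))_{1 ≤ i,k ≤ m}` is nonsingular.  (Here row `i : Fin m` carries the
odd degree `2(i+1) - 1 = 2i + 1` and column `k : Fin m` carries the point
`t_{k+1}`.) -/
theorem odd_chebyshev_matrix_nonsingular (m : ℕ) (hm : 1 ≤ m) :
    (Matrix.of fun i k : Fin m =>
      chebU (2 * (i : ℕ) + 1)
        (Real.cos (2 * ((k : ℕ) + 1) * π / (2 * m + 1)))).det ≠ 0 := by
  classical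
  intro hdet
  set M : Matrix (Fin m) (Fin m) ℝ := Matrix.of fun i k : Fin m =>
      chebU (2 * (i : ℕ) + 1)
        (Real.cos (2 * ((k : ℕ) + 1) * π / (2 * m + 1))) with hM
  have hdetT : Mᵀ.det = 0 := by rw [Matrix.det_transpose]; exact hdet
  obtain ⟨v, hv0, hv⟩ := Matrix.exists_mulVec_eq_zero_iff.mpr hdetT
  set θ : Fin m → ℝ := fun k => 2 * ((k : ℕ) + 1) * π / (2 * m + 1) with hθ
  set c : Fin m → ℝ := fun k => Real.cos (θ k) with hcdef
  have hNpos : (0 : ℝ) < 2 * m + 1 := by positivity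
  have hθfrac : ∀ k : Fin m, θ k = (2 * ((k : ℕ) + 1) / (2 * m + 1)) * π := by
    intro k; rw [hθ]; ring
  have hθmem : ∀ k : Fin m, θ k ∈ Set.Icc 0 π := by
    intro k
    constructor
    · rw [hθ]; positivity
    · rw [hθfrac]
      have h1 : 2 * ((k : ℕ) + 1) / (2 * (m : ℝ) + 1) ≤ 1 := by
        rw [div_le_one hNpos]
        have h2 : (k : ℕ) + 1 ≤ m := k.isLt
        have : ((k : ℕ) : ℝ) + 1 ≤ m := by exact_mod_cast h2
        linarith
      nlinarith [pi_pos]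
  -- injectivity of c
  have hcinj : Function.Injective c := by
    intro k l h
    have hθeq : θ k = θ l := Real.injOn_cos (hθmem k) (hθmem l) h
    rw [hθfrac, hθfrac] at hθeq
    have h2 := mul_right_cancel₀ pi_ne_zero hθeq
    field_simp at h2
    exact Fin.ext (by exact_mod_cast add_right_cancel h2)
  have hc0 : ∀ k, c k ≠ 0 := by
    intro k h
    have hhalf : π / 2 ∈ Set.Icc 0 π := ⟨by positivity, by linarith [pi_pos]⟩
    have hθeq : θ k = π / 2 := by
      apply Real.injOn_cos (hθmem k) hhalf
      show c k = Real.cos (π / 2)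
      rw [h, Real.cos_pi_div_two]
    rw [hθfrac] at hθeq
    have hθeq' : (2 * ((k : ℕ) + 1) / (2 * (m:ℝ) + 1)) * π = (1/2) * π := by
      rw [hθeq]; ring
    have h2 := mul_right_cancel₀ pi_ne_zero hθeq'
    field_simp at h2
    have : 4 * ((k : ℕ) + 1) = 2 * m + 1 := by
      exact_mod_cast (by linarith : (4 * (((k:ℕ):ℝ) + 1) : ℝ) = 2 * (m:ℝ) + 1)
    omega
  have hcne : ∀ k l, c k ≠ -c l := by
    intro k l h
    have h' : c k = Real.cos (π - θ l) := by rw [Real.cos_pi_sub]; exact h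
    have hmem : π - θ l ∈ Set.Icc 0 π := by
      obtain ⟨h1, h2⟩ := hθmem l
      constructor <;> linarith
    have hθeq : θ k = π - θ l := Real.injOn_cos (hθmem k) hmem h'
    rw [hθfrac, hθfrac] at hθeq
    have hθeq' : (2 * ((k : ℕ) + 1) / (2 * (m:ℝ) + 1)) * π
        = (1 - 2 * ((l : ℕ) + 1) / (2 * (m:ℝ) + 1)) * π := by rw [hθeq]; ring
    have h2 := mul_right_cancel₀ pi_ne_zero hθeq'
    field_simp at h2
    have : 2 * ((k : ℕ) + 1) + 2 * ((l : ℕ) + 1) = 2 * m + 1 := by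
      exact_mod_cast (by linarith :
        (2 * (((k:ℕ):ℝ) + 1) + 2 * (((l:ℕ):ℝ) + 1) : ℝ) = 2 * (m:ℝ) + 1)
    omega
  -- the polynomial
  set Q : ℝ[X] := ∑ i : Fin m, C (v i) * U ℝ ((2 * (i : ℕ) + 1 : ℕ) : ℤ) with hQ
  have hv' : ∀ k, ∑ i : Fin m, (U ℝ ((2 * (i : ℕ) + 1 : ℕ) : ℤ)).eval (c k) * v i = 0 := by
    intro k
    have := congrFun hv k
    simpa [Matrix.mulVec, dotProduct, Matrix.transpose_apply, hM, chebU, hcdef, hθ]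
      using this
  have hQc : ∀ k, Q.eval (c k) = 0 := by
    intro k
    rw [hQ]
    simp only [eval_finset_sum, eval_mul, eval_C]
    rw [← hv' k]
    exact Finset.sum_congr rfl fun i _ => mul_comm _ _
  have hQodd : ∀ x : ℝ, Q.eval (-x) = -Q.eval x := by
    intro x
    rw [hQ]
    simp only [eval_finset_sum, eval_mul, eval_C, U_eval_neg']
    rw [← Finset.sum_neg_distrib]
    refine Finset.sum_congr rfl fun i _ => ?_
    have : (-1 : ℝ) ^ (2 * (i : ℕ) + 1) = -1 := Odd.neg_one_pow ⟨(i : ℕ), by ring⟩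
    rw [this]; ring
  have hdeg : Q.natDegree ≤ 2 * m - 1 := by
    rw [hQ]
    apply natDegree_sum_le_of_forall_le
    intro i _
    refine (natDegree_C_mul_le _ _).trans ((U_natDegree_le' _).trans ?_)
    have := i.isLt; omega
  -- the 2m+1 roots
  set f : Fin m ⊕ Fin m ⊕ Unit → ℝ :=
    Sum.elim c (Sum.elim (fun k => -c k) (fun _ => 0)) with hf
  have hfinj : Function.Injective f := by
    rintro (a | a | a) (b | b | b) h <;> simp only [hf, Sum.elim_inl, Sum.elim_inr] at h
    · exact congrArg Sum.inl (hcinj h)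
    · exact absurd h (hcne a b)
    · exact absurd h (hc0 a)
    · exact absurd h.symm (hcne b a)
    · exact congrArg (Sum.inr ∘ Sum.inl) (hcinj (neg_injective h))
    · exact absurd (neg_eq_zero.mp h) (hc0 a)
    · exact absurd h.symm (hc0 b)
    · exact absurd (neg_eq_zero.mp h.symm) (hc0 b)
    · exact congrArg _ (congrArg _ (Subsingleton.elim a b))
  have hevalall : ∀ a, Q.eval (f a) = 0 := by
    rintro (a | a | a)
    · exact hQc a
    · simp only [hf, Sum.elim_inl, Sum.elim_inr]
      rw [hQodd, hQc, neg_zero]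
    · simp only [hf, Sum.elim_inl, Sum.elim_inr]
      have := hQodd 0
      rw [neg_zero] at this
      linarith
  have hQ0 : Q = 0 := by
    apply Polynomial.eq_zero_of_natDegree_lt_card_of_eval_eq_zero Q hfinj hevalall
    rw [Fintype.card_sum, Fintype.card_sum, Fintype.card_fin, Fintype.card_unit]
    omega
  -- extract the top coefficient
  have hvex : ∃ i, v i ≠ 0 := by
    by_contra h; push_neg at h; exact hv0 (funext h)
  obtain ⟨i₀, hi₀, hmax⟩ : ∃ i₀, v i₀ ≠ 0 ∧ ∀ j, i₀ < j → v j = 0 := by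
    obtain ⟨i, hi⟩ := hvex
    have hSne : (Finset.univ.filter (fun i => v i ≠ 0)).Nonempty :=
      ⟨i, by simp [hi]⟩
    refine ⟨(Finset.univ.filter (fun i => v i ≠ 0)).max' hSne, ?_, ?_⟩
    · exact (Finset.mem_filter.mp (Finset.max'_mem _ hSne)).2
    · intro j hj
      by_contra hvj
      have hjS : j ∈ Finset.univ.filter (fun i => v i ≠ 0) :=
        Finset.mem_filter.mpr ⟨Finset.mem_univ _, hvj⟩
      exact absurd (Finset.le_max' _ j hjS) (not_le.mpr hj)
  have hcoeff : Q.coeff (2 * (i₀ : ℕ) + 1) = v i₀ * 2 ^ (2 * (i₀ : ℕ) + 1) := by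
    rw [hQ, finset_sum_coeff]
    rw [Finset.sum_eq_single i₀]
    · rw [coeff_C_mul, U_coeff']
    · intro j _ hj
      rw [coeff_C_mul]
      rcases lt_or_gt_of_ne hj with h' | h'
      · have hz : (U ℝ ((2 * (j : ℕ) + 1 : ℕ) : ℤ)).coeff (2 * (i₀ : ℕ) + 1) = 0 := by
          apply coeff_eq_zero_of_natDegree_lt
          refine lt_of_le_of_lt (U_natDegree_le' _) ?_
          have : (j : ℕ) < (i₀ : ℕ) := h'
          omega
        rw [hz, mul_zero]
      · rw [hmax j h', zero_mul]
    · intro h; exact absurd (Finset.mem_univ i₀) h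
  rw [hQ0, coeff_zero] at hcoeff
  have h2 : (2 : ℝ) ^ (2 * (i₀ : ℕ) + 1) ≠ 0 := by positivity
  rcases mul_eq_zero.mp hcoeff.symm with h | h
  · exact hi₀ h
  · exact absurd h h2
end
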